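/- arXiv:1702.02047 — 6 statements merged into one kernel-verified Lean document; each statement's English description precedes it below -/
import Mathlib

section
/- For every concept class 𝓛 over a universe X, PBTD(𝓛) equals the infimum of PBTD(𝓛, ≺) taken over all strict linear orders ≺ on 𝓛. -/
/-!
Extending a preference order only shrinks each concept's set of competitors, so `PBTDord` is
antitone in the order; by Szpilrajn's theorem every strict partial order extends to a strict
linear one, which therefore does at least as well.
-/

namespace PBT

variable {X : Type*}

/-- A set `L ⊆ X` is consistent with a set `T` of labeled examples
(label `true` = “+”, label `false` = “−”). -/
def Consistent (L : Set X) (T : Set (X × Bool)) : Prop :=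
  ∀ p ∈ T, (p.2 = true → p.1 ∈ L) ∧ (p.2 = false → p.1 ∉ L)

/-- `T` is a teaching set for `L` w.r.t. the concept class `𝓛`:
`L` is the only concept in `𝓛` that is consistent with `T`. -/
def IsTeachingSet (𝓛 : Set (Set X)) (L : Set X) (T : Set (X × Bool)) : Prop :=
  Consistent L T ∧ ∀ L' ∈ 𝓛, Consistent L' T → L' = L

/-- `TD L 𝓛`: least size of a finite teaching set for `L` w.r.t. `𝓛` (`⊤` if none exists). -/
noncomputable def TD (L : Set X) (𝓛 : Set (Set X)) : ℕ∞ :=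
  sInf {n : ℕ∞ | ∃ T : Finset (X × Bool), IsTeachingSet 𝓛 L ↑T ∧ n = T.card}

/-- A positive teaching set, identified with its set of (positively labeled) points. -/
def IsPosTeachingSet (𝓛 : Set (Set X)) (L : Set X) (S : Set X) : Prop :=
  S ⊆ L ∧ ∀ L' ∈ 𝓛, S ⊆ L' → L' = L

/-- least size of a finite positive teaching set for `L` w.r.t. `𝓛` (`⊤` if none exists). -/
noncomputable def TDpos (L : Set X) (𝓛 : Set (Set X)) : ℕ∞ :=
  sInf {n : ℕ∞ | ∃ S : Finset X, IsPosTeachingSet 𝓛 L ↑S ∧ n = S.card}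

/-- A strict partial order (preference relation) on concepts:
`pr L' L` means `L` is strictly preferred over `L'`. -/
def StrictPO (pr : Set X → Set X → Prop) : Prop :=
  (∀ A, ¬ pr A A) ∧ ∀ A B C : Set X, pr A B → pr B C → pr A C

/-- `PBTDord 𝓛 pr = sup_{L ∈ 𝓛} TD(L, 𝓛 \ {L' ∈ 𝓛 | pr L' L})`. -/
noncomputable def PBTDord (𝓛 : Set (Set X)) (pr : Set X → Set X → Prop) : ℕ∞ :=
  ⨆ L ∈ 𝓛, TD L {L' ∈ 𝓛 | ¬ pr L' L}

/-- preference-based teaching dimension of `𝓛`. -/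
noncomputable def PBTD (𝓛 : Set (Set X)) : ℕ∞ :=
  sInf {v : ℕ∞ | ∃ pr, StrictPO pr ∧ v = PBTDord 𝓛 pr}

/-- `PBTDposOrd 𝓛 pr = sup_{L ∈ 𝓛} TD⁺(L, 𝓛 \ {L' ∈ 𝓛 | pr L' L})`. -/
noncomputable def PBTDposOrd (𝓛 : Set (Set X)) (pr : Set X → Set X → Prop) : ℕ∞ :=
  ⨆ L ∈ 𝓛, TDpos L {L' ∈ 𝓛 | ¬ pr L' L}

/-- positive preference-based teaching dimension of `𝓛`. -/
noncomputable def PBTDpos (𝓛 : Set (Set X)) : ℕ∞ :=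
  sInf {v : ℕ∞ | ∃ pr, StrictPO pr ∧ v = PBTDposOrd 𝓛 pr}

theorem _root_.IsStrictOrder.exists_isStrictTotalOrder_le {α : Type*} (r : α → α → Prop)
    [IsStrictOrder α r] : ∃ s, IsStrictTotalOrder α s ∧ r ≤ s := by
  let := partialOrderOfSO r
  refine ⟨fun a b => toLinearExtension a < toLinearExtension b,
    inferInstanceAs (IsStrictTotalOrder (LinearExtension α) (· < ·)), fun a b hab => ?_⟩
  have hlt : a < b := hab
  exact (toLinearExtension.monotone hlt.le).lt_of_ne hlt.ne

theorem strictPO_iff_isStrictOrder {pr : Set X → Set X → Prop} :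
    StrictPO pr ↔ IsStrictOrder (Set X) pr :=
  ⟨fun ⟨hirr, htrans⟩ => { irrefl := hirr, trans := htrans },
    fun _ => ⟨irrefl, fun _ _ _ => _root_.trans⟩⟩

theorem IsTeachingSet.mono {𝓛 𝓛' : Set (Set X)} {L : Set X} {T : Set (X × Bool)}
    (hT : IsTeachingSet 𝓛 L T) (h : 𝓛' ⊆ 𝓛) : IsTeachingSet 𝓛' L T :=
  ⟨hT.1, fun L' hL' => hT.2 L' (h hL')⟩

theorem TD_mono {L : Set X} {𝓛' 𝓛 : Set (Set X)} (h : 𝓛' ⊆ 𝓛) : TD L 𝓛' ≤ TD L 𝓛 :=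
  sInf_le_sInf fun _ ⟨T, hT, hn⟩ => ⟨T, hT.mono h, hn⟩

theorem PBTDord_antitone (𝓛 : Set (Set X)) : Antitone (PBTDord 𝓛) :=
  fun _ _ h => iSup₂_mono fun _ _ => TD_mono fun _ ⟨hL', hpr⟩ => ⟨hL', fun h' => hpr (h _ _ h')⟩

/-- `PBTD(𝓛)` equals the infimum of `PBTD(𝓛, ≺)` over all strict linear orders `≺` on `𝓛`. -/
theorem pbtd_eq_inf_over_linear_orders {X : Type*} (𝓛 : Set (Set X)) :
    PBTD 𝓛 =
      sInf {v : ℕ∞ | ∃ pr : Set X → Set X → Prop, StrictPO pr ∧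
        (∀ L ∈ 𝓛, ∀ L' ∈ 𝓛, L ≠ L' → pr L L' ∨ pr L' L) ∧ v = PBTDord 𝓛 pr} := by
  refine le_antisymm (sInf_le_sInf fun _ ⟨pr, hpr, _, hv⟩ => ⟨pr, hpr, hv⟩) (le_sInf ?_)
  rintro _ ⟨pr, hpr, rfl⟩
  have := strictPO_iff_isStrictOrder.mp hpr
  obtain ⟨pr', hpr', hle⟩ := IsStrictOrder.exists_isStrictTotalOrder_le pr
  have htotal : ∀ L ∈ 𝓛, ∀ L' ∈ 𝓛, L ≠ L' → pr' L L' ∨ pr' L' L := fun L _ L' _ hne =>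
    (trichotomous_of pr' L L').imp_right (Or.resolve_left · hne)
  refine (sInf_le ?_).trans (PBTDord_antitone 𝓛 hle)
  exact ⟨pr', strictPO_iff_isStrictOrder.mpr hpr'.toIsStrictOrder, htotal, rfl⟩

end PBT
end

section
/- Let 𝓛∞ = {[0,a] : 0 ≤ a < 1} be the concept class of closed half-intervals over the universe X = [0,1) ⊂ ℝ. Then PBTD⁺(𝓛∞) = 1, while no concept of 𝓛∞ has a finite teaching set w.r.t. 𝓛∞, i.e., TD(L,𝓛∞) = ∞ for every L ∈ 𝓛∞ (hence TD_min(𝓛∞) = ∞). -/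
namespace PBT

variable {X : Type*}

/-- The class of closed half-intervals `[0,a]`, `0 ≤ a < 1`, over the universe `[0,1)`. -/
def HalfIntervals : Set (Set ↥(Set.Ico (0:ℝ) 1)) :=
  {L | ∃ a : ℝ, 0 ≤ a ∧ a < 1 ∧ L = {x : ↥(Set.Ico (0:ℝ) 1) | (x : ℝ) ≤ a}}

/-!
Prefer smaller concepts. Then the single point `a` teaches `[0,a]`, since every other half-interval
containing `a` is a strict superset of it. One example is needed because a strict order cannot
prefer each of two distinct concepts over the other. Without preferences no finite sample pins
`[0,a]` down: its negative examples lie strictly to the right of `a`, so `[0,b]` is consistent with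
the sample for every `b > a` close enough to `a`.
-/

open scoped Topology

theorem TD_eq_top_iff {𝓛 : Set (Set X)} {L : Set X} :
    TD L 𝓛 = ⊤ ↔ ∀ T : Finset (X × Bool), ¬ IsTeachingSet 𝓛 L ↑T := by
  rw [TD, sInf_eq_top]
  constructor
  · exact fun h T hT => ENat.natCast_ne_top _ (h _ ⟨T, hT, rfl⟩)
  · rintro h _ ⟨T, hT, -⟩
    exact absurd hT (h T)

theorem TDpos_le_card {𝓛 : Set (Set X)} {L : Set X} {S : Finset X}
    (hS : IsPosTeachingSet 𝓛 L ↑S) : TDpos L 𝓛 ≤ S.card :=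
  sInf_le ⟨S, hS, rfl⟩

theorem one_le_TDpos {𝓛 : Set (Set X)} {L L' : Set X} (hL' : L' ∈ 𝓛) (hne : L' ≠ L) :
    1 ≤ TDpos L 𝓛 := by
  refine le_sInf ?_
  rintro _ ⟨S, ⟨-, hS⟩, rfl⟩
  have hS_ne : S.Nonempty := by
    by_contra! hS_empty
    exact hne (hS L' hL' (by simp [hS_empty]))
  exact_mod_cast hS_ne.card_pos

theorem TDpos_le_PBTDposOrd {𝓛 : Set (Set X)} {L : Set X} (pr : Set X → Set X → Prop)
    (hL : L ∈ 𝓛) : TDpos L {L' ∈ 𝓛 | ¬ pr L' L} ≤ PBTDposOrd 𝓛 pr :=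
  le_iSup₂ (f := fun L (_ : L ∈ 𝓛) => TDpos L {L' ∈ 𝓛 | ¬ pr L' L}) L hL

theorem one_le_PBTDposOrd {𝓛 : Set (Set X)} {pr : Set X → Set X → Prop} (hpr : StrictPO pr)
    {A B : Set X} (hA : A ∈ 𝓛) (hB : B ∈ 𝓛) (hAB : A ≠ B) : 1 ≤ PBTDposOrd 𝓛 pr := by
  by_cases hBA : pr B A
  · have hAB' : ¬ pr A B := fun h => hpr.1 A (hpr.2 A B A h hBA)
    exact (one_le_TDpos (𝓛 := {L' ∈ 𝓛 | ¬ pr L' B}) ⟨hA, hAB'⟩ hAB).trans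
      (TDpos_le_PBTDposOrd pr hB)
  · exact (one_le_TDpos (𝓛 := {L' ∈ 𝓛 | ¬ pr L' A}) ⟨hB, hBA⟩ hAB.symm).trans
      (TDpos_le_PBTDposOrd pr hA)

theorem one_le_PBTDpos {𝓛 : Set (Set X)} {A B : Set X} (hA : A ∈ 𝓛) (hB : B ∈ 𝓛)
    (hAB : A ≠ B) : 1 ≤ PBTDpos 𝓛 := by
  refine le_sInf ?_
  rintro _ ⟨pr, hpr, rfl⟩
  exact one_le_PBTDposOrd hpr hA hB hAB

theorem PBTDpos_le_PBTDposOrd {𝓛 : Set (Set X)} {pr : Set X → Set X → Prop}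
    (hpr : StrictPO pr) : PBTDpos 𝓛 ≤ PBTDposOrd 𝓛 pr :=
  sInf_le ⟨pr, hpr, rfl⟩

theorem strictPO_ssuperset : StrictPO fun A B : Set X => B ⊂ A :=
  ⟨fun A => ssubset_irrefl A, fun _ _ _ hBA hCB => hCB.trans hBA⟩

theorem isPosTeachingSet_not_ssuperset {𝓛 : Set (Set X)} {L S : Set X} (hSL : S ⊆ L)
    (hL : ∀ L' ∈ 𝓛, S ⊆ L' → L ⊆ L') : IsPosTeachingSet {L' ∈ 𝓛 | ¬ L ⊂ L'} L S :=
  ⟨hSL, fun L' ⟨hL', hnot⟩ hSL' =>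
    by_contra fun hne => hnot ((hL L' hL' hSL').ssubset_of_ne (Ne.symm hne))⟩

def halfInterval (a : ℝ) : Set (Set.Ico (0:ℝ) 1) :=
  {x | (x : ℝ) ≤ a}

theorem halfInterval_mem {a : ℝ} (ha : a ∈ Set.Ico (0:ℝ) 1) : halfInterval a ∈ HalfIntervals :=
  ⟨a, ha.1, ha.2, rfl⟩

theorem halfInterval_subset_iff {a b : ℝ} (ha : a ∈ Set.Ico (0:ℝ) 1) :
    halfInterval a ⊆ halfInterval b ↔ a ≤ b :=
  ⟨fun h => @h ⟨a, ha⟩ (le_refl a), fun hab _ hx => le_trans hx hab⟩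

theorem halfInterval_injOn : Set.InjOn halfInterval (Set.Ico (0:ℝ) 1) := fun _ ha _ hb h =>
  le_antisymm ((halfInterval_subset_iff ha).1 h.le) ((halfInterval_subset_iff hb).1 h.ge)

theorem not_isTeachingSet_halfInterval {a : ℝ} (ha : a ∈ Set.Ico (0:ℝ) 1)
    (T : Finset (Set.Ico (0:ℝ) 1 × Bool)) :
    ¬ IsTeachingSet HalfIntervals (halfInterval a) ↑T := by
  rintro ⟨hcons, huniq⟩
  have hneg : ∀ p ∈ T, ∀ᶠ b in 𝓝 a, p.2 = false → b < (p.1 : ℝ) := fun p hp => by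
    by_cases hp2 : p.2 = false
    · have hap : a < p.1 := not_le.1 ((hcons p hp).2 hp2)
      filter_upwards [eventually_lt_nhds hap] with b hb using fun _ => hb
    · exact Filter.Eventually.of_forall fun _ h => absurd h hp2
  have hev : ∀ᶠ b in 𝓝 a, ∀ p ∈ T, p.2 = false → b < (p.1 : ℝ) :=
    (Filter.eventually_all_finset T).2 hneg
  obtain ⟨b, hab, hb1, hbT⟩ := ((eventually_lt_nhds ha.2).and hev).exists_gt
  have hb : b ∈ Set.Ico (0:ℝ) 1 := ⟨ha.1.trans hab.le, hb1⟩
  have hconsb : Consistent (halfInterval b) ↑T := fun p hp =>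
    ⟨fun h => ((hcons p hp).1 h).trans hab.le, fun h => not_le.2 (hbT p hp h)⟩
  exact hab.ne' (halfInterval_injOn hb ha (huniq _ (halfInterval_mem hb) hconsb))

theorem PBTDposOrd_halfIntervals_ssuperset_le_one :
    PBTDposOrd HalfIntervals (fun A B => B ⊂ A) ≤ 1 := by
  refine iSup₂_le ?_
  rintro _ ⟨a, h0, h1, rfl⟩
  have ha : a ∈ Set.Ico (0:ℝ) 1 := ⟨h0, h1⟩
  have hS : IsPosTeachingSet {L' ∈ HalfIntervals | ¬ halfInterval a ⊂ L'} (halfInterval a)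
      ↑({⟨a, ha⟩} : Finset (Set.Ico (0:ℝ) 1)) := by
    refine isPosTeachingSet_not_ssuperset (by simp [halfInterval]) ?_
    rintro _ ⟨b, -, -, rfl⟩ hab
    exact (halfInterval_subset_iff ha).2 (by simpa [halfInterval] using hab)
  exact (TDpos_le_card hS).trans_eq (by simp)

/-- `PBTD⁺(𝓛∞) = 1`, while no concept of `𝓛∞` has a finite teaching set w.r.t. `𝓛∞`. -/
theorem halfintervals_pbtdpos_one_td_infinite :
    PBTDpos HalfIntervals = 1 ∧ ∀ L ∈ HalfIntervals, TD L HalfIntervals = ⊤ := by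
  have h0 : (0:ℝ) ∈ Set.Ico (0:ℝ) 1 := by norm_num
  have h_half : (1/2:ℝ) ∈ Set.Ico (0:ℝ) 1 := by norm_num
  refine ⟨le_antisymm ?_ ?_, ?_⟩
  · exact (PBTDpos_le_PBTDposOrd strictPO_ssuperset).trans
      PBTDposOrd_halfIntervals_ssuperset_le_one
  · exact one_le_PBTDpos (halfInterval_mem h0) (halfInterval_mem h_half)
      (halfInterval_injOn.ne h0 h_half (by norm_num))
  · rintro _ ⟨a, ha0, ha1, rfl⟩
    exact TD_eq_top_iff.2 (not_isTeachingSet_halfInterval ⟨ha0, ha1⟩)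

end PBT
end

section
/- For every k ≥ 1, the class LINSET_k of linear subsets of ℕ₀ with at most k generators satisfies PBTD⁺(LINSET_k) = k and k − 1 ≤ PBTD(LINSET_k) ≤ k. -/
/-!
Preferring smaller concepts, a generating set `G` teaches `⟨G⟩` positively: every remaining
concept containing `G` contains `⟨G⟩`, hence equals it. This gives both upper bounds.

For the lower bounds, the sets `S_A = {0, k} ∪ {k + l : l ∈ A} ∪ [2k, ∞)` with
`A ⊆ {1, …, k - 1}` lie in `LINSET k`. Every strict order has a minimal element in this finite
family, which must then be told apart from all other members. Flipping one coordinate `l` of `A`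
changes `S_A` only at `k + l`, so the sample has to mention all `k - 1` cube points. A positive
sample consisting of exactly these points is also contained in `⟨k + 1, …, 2k⟩`, and adding this
set to the family (it is contained in `S_{1,…,k-1}`) forces a `k`-th positive example.
-/

namespace PBT

variable {X : Type*}

/-- `⟨G⟩ = {Σ_{g ∈ G} a(g)·g : a(g) ∈ ℕ₀}`. -/
def linSpan (G : Finset ℕ) : Set ℕ :=
  {n : ℕ | ∃ a : ℕ → ℕ, n = ∑ g ∈ G, a g * g}

/-- `LINSET_k`: non-empty linear subsets of `ℕ₀` with at most `k` (positive) generators. -/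
def LINSET (k : ℕ) : Set (Set ℕ) :=
  {L | ∃ G : Finset ℕ, (∀ g ∈ G, 0 < g) ∧ 1 ≤ G.card ∧ G.card ≤ k ∧ L = linSpan G}

theorem StrictPO.exists_minimal {pr : Set X → Set X → Prop} (hpr : StrictPO pr)
    {F : Set (Set X)} (hF : F.Finite) (hne : F.Nonempty) :
    ∃ L ∈ F, ∀ L' ∈ F, ¬ pr L' L := by
  have : IsStrictOrder (Set X) pr := { irrefl := hpr.1, trans := hpr.2 }
  obtain ⟨L, hL, hmin⟩ := ((Set.wellFoundedOn_iff (r := pr)).mp hF.wellFoundedOn).has_min F hne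
  exact ⟨L, hL, fun L' hL' h => hmin L' hL' ⟨h, hL', hL⟩⟩

def positiveSample (S : Finset X) : Finset (X × Bool) :=
  S.map (Function.Embedding.sectL X true)

theorem consistent_positiveSample_iff {L : Set X} {S : Finset X} :
    Consistent L ↑(positiveSample S) ↔ ↑S ⊆ L := by
  simp [Consistent, positiveSample, Set.subset_def]

theorem TD_le_TDpos (L : Set X) (𝓛 : Set (Set X)) : TD L 𝓛 ≤ TDpos L 𝓛 := by
  refine le_sInf ?_
  rintro _ ⟨S, ⟨hSL, huniq⟩, rfl⟩
  refine sInf_le ⟨positiveSample S, ⟨consistent_positiveSample_iff.mpr hSL, fun L' hL' hT =>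
    huniq L' hL' (consistent_positiveSample_iff.mp hT)⟩, ?_⟩
  rw [positiveSample, Finset.card_map]

theorem PBTD_le_PBTDpos (𝓛 : Set (Set X)) : PBTD 𝓛 ≤ PBTDpos 𝓛 := by
  refine le_sInf ?_
  rintro _ ⟨pr, hpr, rfl⟩
  exact sInf_le_of_le ⟨pr, hpr, rfl⟩ (iSup₂_mono fun L _ => TD_le_TDpos _ _)

theorem PBTDpos_le_of_forall_exists_finset {𝓛 : Set (Set X)} (c : ℕ)
    (h : ∀ L ∈ 𝓛, ∃ S : Finset X, ↑S ⊆ L ∧ S.card ≤ c ∧ ∀ L' ∈ 𝓛, ↑S ⊆ L' → L ⊆ L') :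
    PBTDpos 𝓛 ≤ c := by
  have hsup : StrictPO fun A B : Set X => B ⊂ A :=
    ⟨fun A => ssubset_irrefl A, fun _ _ _ h₁ h₂ => h₂.trans h₁⟩
  refine sInf_le_of_le ⟨_, hsup, rfl⟩ (iSup₂_le fun L hL => ?_)
  obtain ⟨S, hSL, hSc, hmin⟩ := h L hL
  refine sInf_le_of_le ⟨S, ⟨hSL, fun L' ⟨hL', hnot⟩ hSL' => ?_⟩, rfl⟩ (by exact_mod_cast hSc)
  exact ((hmin L' hL' hSL').eq_of_not_lt hnot).symm

theorem le_PBTD_of_finite {𝓛 F : Set (Set X)} (hF𝓛 : F ⊆ 𝓛) (hF : F.Finite)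
    (hne : F.Nonempty) (c : ℕ)
    (h : ∀ L ∈ F, ∀ T : Finset (X × Bool), Consistent L ↑T → T.card < c →
      ∃ L' ∈ F, L' ≠ L ∧ Consistent L' ↑T) :
    (c : ℕ∞) ≤ PBTD 𝓛 := by
  refine le_sInf ?_
  rintro _ ⟨pr, hpr, rfl⟩
  obtain ⟨L, hL, hmin⟩ := hpr.exists_minimal hF hne
  refine le_trans (le_sInf ?_) (le_iSup₂ (f := fun L _ => TD L {L' ∈ 𝓛 | ¬ pr L' L}) L (hF𝓛 hL))
  rintro _ ⟨T, ⟨hLT, huniq⟩, rfl⟩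
  by_contra! hlt
  obtain ⟨L', hL', hne, hL'T⟩ := h L hL T hLT (by exact_mod_cast hlt)
  exact hne (huniq L' ⟨hF𝓛 hL', hmin L' hL'⟩ hL'T)

theorem le_PBTDpos_of_finite {𝓛 F : Set (Set X)} (hF𝓛 : F ⊆ 𝓛) (hF : F.Finite)
    (hne : F.Nonempty) (c : ℕ)
    (h : ∀ L ∈ F, ∀ S : Finset X, ↑S ⊆ L → S.card < c → ∃ L' ∈ F, L' ≠ L ∧ ↑S ⊆ L') :
    (c : ℕ∞) ≤ PBTDpos 𝓛 := by
  refine le_sInf ?_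
  rintro _ ⟨pr, hpr, rfl⟩
  obtain ⟨L, hL, hmin⟩ := hpr.exists_minimal hF hne
  refine le_trans (le_sInf ?_) (le_iSup₂ (f := fun L _ => TDpos L {L' ∈ 𝓛 | ¬ pr L' L}) L (hF𝓛 hL))
  rintro _ ⟨S, ⟨hSL, huniq⟩, rfl⟩
  by_contra! hlt
  obtain ⟨L', hL', hne, hSL'⟩ := h L hL S hSL (by exact_mod_cast hlt)
  exact hne (huniq L' ⟨hF𝓛 hL', hmin L' hL'⟩ hSL')

theorem linSpan_eq_closure (G : Finset ℕ) : linSpan G = AddSubmonoid.closure (G : Set ℕ) := by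
  classical
  ext n
  rw [SetLike.mem_coe, AddSubmonoid.mem_closure_finset]
  constructor
  · rintro ⟨a, rfl⟩
    refine ⟨fun g => if g ∈ G then a g else 0, fun g hg => ?_, Finset.sum_congr rfl fun g hg => ?_⟩
    · by_contra hgG
      exact hg (if_neg hgG)
    · simp [hg]
  · rintro ⟨a, -, rfl⟩
    exact ⟨a, by simp only [smul_eq_mul]⟩

theorem subset_linSpan (G : Finset ℕ) : ↑G ⊆ linSpan G := by
  rw [linSpan_eq_closure]
  exact AddSubmonoid.subset_closure

theorem linSpan_subset {G : Finset ℕ} {P : Set ℕ} (h0 : 0 ∈ P) (hG : ↑G ⊆ P)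
    (hadd : ∀ x ∈ P, ∀ y ∈ P, x + y ∈ P) : linSpan G ⊆ P := by
  rw [linSpan_eq_closure]
  exact AddSubmonoid.closure_le (S := ⟨⟨P, fun {x y} hx hy => hadd x hx y hy⟩, h0⟩) |>.mpr hG

theorem linSpan_subset_linSpan {G G' : Finset ℕ} (h : ↑G ⊆ linSpan G') :
    linSpan G ⊆ linSpan G' := by
  rw [linSpan_eq_closure G'] at h ⊢
  rw [linSpan_eq_closure]
  exact AddSubmonoid.closure_le.mpr h

theorem linSpan_subset_eq_zero_or_le {G : Finset ℕ} {m : ℕ} (hG : ∀ g ∈ G, m ≤ g) :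
    linSpan G ⊆ {n | n = 0 ∨ m ≤ n} := by
  refine linSpan_subset (Or.inl rfl) (fun g hg => Or.inr (hG g hg)) ?_
  rintro x (rfl | hx) y hy
  · simpa using hy
  · exact Or.inr (hx.trans (Nat.le_add_right x y))

theorem PBTDpos_LINSET_le (k : ℕ) : PBTDpos (LINSET k) ≤ k := by
  refine PBTDpos_le_of_forall_exists_finset k ?_
  rintro _ ⟨G, -, -, hGk, rfl⟩
  refine ⟨G, subset_linSpan G, hGk, ?_⟩
  rintro _ ⟨G', -, -, -, rfl⟩ hGG'
  exact linSpan_subset_linSpan hGG'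

def cubeSet (k : ℕ) (A : Finset ℕ) : Set ℕ :=
  {n | n = 0 ∨ n = k ∨ (∃ l ∈ A, n = k + l) ∨ 2 * k ≤ n}

/-- Besides `k`, coordinate `l` contributes `k + l` if `l ∈ A` and `2k + l` otherwise; either way
every `n ≥ 2k` with `n ≡ l (mod k)` is reached. -/
def cubeGenerators (k : ℕ) (A : Finset ℕ) : Finset ℕ :=
  insert k ((Finset.Icc 1 (k - 1)).image fun l => if l ∈ A then k + l else 2 * k + l)

section Cube

open scoped symmDiff

variable {k : ℕ} {A : Finset ℕ}

theorem cubeSet_add_mem {x y : ℕ} (hx : x ∈ cubeSet k A) (hy : y ∈ cubeSet k A) :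
    x + y ∈ cubeSet k A := by
  have nonneg : ∀ n ∈ cubeSet k A, n = 0 ∨ k ≤ n := by
    rintro n (h | h | ⟨l, -, h⟩ | h) <;> omega
  rcases nonneg x hx with rfl | hx'
  · simpa using hy
  rcases nonneg y hy with rfl | hy'
  · simpa using hx
  exact Or.inr (Or.inr (Or.inr (by omega)))

theorem linSpan_cubeGenerators (hk : 1 ≤ k) (hA : A ⊆ Finset.Icc 1 (k - 1)) :
    linSpan (cubeGenerators k A) = cubeSet k A := by
  refine subset_antisymm (linSpan_subset (Or.inl rfl) ?_ fun x hx y hy => cubeSet_add_mem hx hy) ?_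
  · intro g hg
    rcases Finset.mem_insert.mp hg with rfl | hg
    · exact Or.inr (Or.inl rfl)
    obtain ⟨l, -, rfl⟩ := Finset.mem_image.mp hg
    split_ifs with hl
    · exact Or.inr (Or.inr (Or.inl ⟨l, hl, rfl⟩))
    · exact Or.inr (Or.inr (Or.inr (Nat.le_add_right _ _)))
  rw [linSpan_eq_closure]
  set M := AddSubmonoid.closure (cubeGenerators k A : Set ℕ)
  have hkM : k ∈ M := AddSubmonoid.subset_closure (Finset.mem_insert_self _ _)
  have hgen : ∀ l ∈ Finset.Icc 1 (k - 1), (if l ∈ A then k + l else 2 * k + l) ∈ M :=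
    fun l hl => AddSubmonoid.subset_closure
      (Finset.mem_insert_of_mem (Finset.mem_image_of_mem _ hl))
  rintro n (rfl | rfl | ⟨l, hl, rfl⟩ | hn) <;> rw [SetLike.mem_coe]
  · exact M.zero_mem
  · exact hkM
  · simpa [hl] using hgen l (hA hl)
  obtain ⟨q, r, hr, rfl⟩ : ∃ q r, r < k ∧ n = 2 * k + k * q + r :=
    ⟨(n - 2 * k) / k, (n - 2 * k) % k, Nat.mod_lt _ hk, by
      have := Nat.div_add_mod (n - 2 * k) k; omega⟩
  have hmul : ∀ m, k * m ∈ M := fun m => by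
    simpa [smul_eq_mul, mul_comm] using M.nsmul_mem hkM m
  by_cases hr0 : r = 0
  · subst hr0
    convert hmul (q + 2) using 1
    ring
  have hrI : r ∈ Finset.Icc 1 (k - 1) := Finset.mem_Icc.mpr ⟨by omega, by omega⟩
  by_cases hrA : r ∈ A
  · have := M.add_mem (hmul (q + 1)) (by simpa [hrA] using hgen r hrI)
    convert this using 1
    ring
  · have := M.add_mem (hmul q) (by simpa [hrA] using hgen r hrI)
    convert this using 1
    ring

theorem cubeGenerators_card_le (hk : 1 ≤ k) : (cubeGenerators k A).card ≤ k :=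
  calc (cubeGenerators k A).card ≤ (Finset.Icc 1 (k - 1)).card + 1 :=
        (Finset.card_insert_le _ _).trans (Nat.add_le_add_right Finset.card_image_le 1)
    _ = k := by rw [Nat.card_Icc]; omega

theorem cubeSet_mem_LINSET (hk : 1 ≤ k) (hA : A ⊆ Finset.Icc 1 (k - 1)) :
    cubeSet k A ∈ LINSET k := by
  refine ⟨cubeGenerators k A, fun g hg => ?_, Finset.card_pos.mpr ⟨k, Finset.mem_insert_self _ _⟩,
    cubeGenerators_card_le hk, (linSpan_cubeGenerators hk hA).symm⟩
  rcases Finset.mem_insert.mp hg with rfl | hg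
  · exact hk
  obtain ⟨l, -, rfl⟩ := Finset.mem_image.mp hg
  split_ifs <;> omega

theorem add_mem_cubeSet_iff {l : ℕ} (hl : l ∈ Finset.Icc 1 (k - 1)) :
    k + l ∈ cubeSet k A ↔ l ∈ A := by
  have := Finset.mem_Icc.mp hl
  refine ⟨?_, fun h => Or.inr (Or.inr (Or.inl ⟨l, h, rfl⟩))⟩
  rintro (h | h | ⟨l', hl', h⟩ | h)
  · omega
  · omega
  · rwa [Nat.add_left_cancel h]
  · omega

theorem mem_cubeSet_symmDiff_singleton_iff {l p : ℕ} (hp : p ≠ k + l) :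
    p ∈ cubeSet k (A ∆ {l}) ↔ p ∈ cubeSet k A := by
  have hcoord : (∃ l' ∈ A ∆ {l}, p = k + l') ↔ ∃ l' ∈ A, p = k + l' := by
    refine exists_congr fun l' => and_congr_left fun hp' => ?_
    have : l' ≠ l := by rintro rfl; exact hp hp'
    simp [Finset.mem_symmDiff, this]
  simp only [cubeSet, Set.mem_ofPred_eq, hcoord]

theorem cubeSet_symmDiff_singleton_ne {l : ℕ} (hl : l ∈ Finset.Icc 1 (k - 1)) :
    cubeSet k (A ∆ {l}) ≠ cubeSet k A := by
  intro h
  have hflip := add_mem_cubeSet_iff (A := A ∆ {l}) hl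
  rw [h, add_mem_cubeSet_iff hl] at hflip
  simp [Finset.mem_symmDiff] at hflip

end Cube

def cubeFamily (k : ℕ) : Set (Set ℕ) :=
  cubeSet k '' ↑(Finset.Icc 1 (k - 1)).powerset

/-- Contains every cube point `k + l` but not `k`. -/
def intervalSpan (k : ℕ) : Set ℕ :=
  linSpan (Finset.Icc (k + 1) (2 * k))

section Families

open scoped symmDiff

variable {k : ℕ}

theorem cubeFamily_finite (k : ℕ) : (cubeFamily k).Finite :=
  (Finset.finite_toSet _).image _

theorem cubeFamily_subset_LINSET (hk : 1 ≤ k) : cubeFamily k ⊆ LINSET k := by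
  rintro _ ⟨A, hA, rfl⟩
  exact cubeSet_mem_LINSET hk (Finset.mem_powerset.mp hA)

theorem symmDiff_singleton_mem_cubeFamily {A : Finset ℕ} {l : ℕ}
    (hA : A ⊆ Finset.Icc 1 (k - 1)) (hl : l ∈ Finset.Icc 1 (k - 1)) :
    cubeSet k (A ∆ {l}) ∈ cubeFamily k :=
  ⟨A ∆ {l}, Finset.mem_powerset.mpr <| Finset.symmDiff_subset_union.trans <|
    Finset.union_subset hA (Finset.singleton_subset_iff.mpr hl), rfl⟩

theorem exists_add_notMem_of_card_lt {U : Finset ℕ} (hU : U.card < k - 1) :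
    ∃ l ∈ Finset.Icc 1 (k - 1), k + l ∉ U := by
  obtain ⟨l, hl, hlU⟩ := Finset.exists_mem_notMem_of_card_lt_card
    (s := U.image (· - k)) (t := Finset.Icc 1 (k - 1))
    (Finset.card_image_le.trans_lt (by rwa [Nat.card_Icc, Nat.add_sub_cancel]))
  exact ⟨l, hl, fun h => hlU (Finset.mem_image.mpr ⟨k + l, h, by omega⟩)⟩

theorem intervalSpan_mem_LINSET (hk : 1 ≤ k) : intervalSpan k ∈ LINSET k :=
  ⟨Finset.Icc (k + 1) (2 * k), fun _ hg => by simp at hg; omega, by simp; omega, by simp; omega,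
    rfl⟩

theorem intervalSpan_subset : intervalSpan k ⊆ {n | n = 0 ∨ k + 1 ≤ n} :=
  linSpan_subset_eq_zero_or_le fun _ hg => (Finset.mem_Icc.mp hg).1

theorem intervalSpan_subset_cubeSet : intervalSpan k ⊆ cubeSet k (Finset.Icc 1 (k - 1)) := by
  intro n hn
  rcases intervalSpan_subset hn with h | h
  · exact Or.inl h
  by_cases h2k : 2 * k ≤ n
  · exact Or.inr (Or.inr (Or.inr h2k))
  · exact Or.inr (Or.inr (Or.inl ⟨n - k, Finset.mem_Icc.mpr ⟨by omega, by omega⟩, by omega⟩))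

theorem cubeSet_ne_intervalSpan (hk : 1 ≤ k) (A : Finset ℕ) : cubeSet k A ≠ intervalSpan k := by
  intro h
  have : k ∈ intervalSpan k := h ▸ Or.inr (Or.inl rfl)
  rcases intervalSpan_subset this with h | h <;> omega

/-- Such an `S` consists of the `k - 1` cube points only. -/
theorem subset_intervalSpan_of_card_lt {S : Finset ℕ} (hS : S.card < k)
    (hcube : ∀ l ∈ Finset.Icc 1 (k - 1), k + l ∈ S) : ↑S ⊆ intervalSpan k := by
  set C := (Finset.Icc 1 (k - 1)).image (k + ·)
  have hCS : C ⊆ S := fun x hx => by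
    obtain ⟨l, hl, rfl⟩ := Finset.mem_image.mp hx
    exact hcube l hl
  have hC : C.card = k - 1 := by
    rw [Finset.card_image_of_injective _ (add_right_injective k), Nat.card_Icc]
    omega
  rw [← Finset.eq_of_subset_of_card_le hCS (by omega)]
  refine subset_trans ?_ (subset_linSpan _)
  intro x hx
  obtain ⟨l, hl, rfl⟩ := Finset.mem_image.mp hx
  rw [Finset.mem_Icc] at hl
  rw [Finset.mem_coe, Finset.mem_Icc]
  omega

theorem le_PBTD_LINSET (hk : 1 ≤ k) : ((k - 1 : ℕ) : ℕ∞) ≤ PBTD (LINSET k) := by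
  refine le_PBTD_of_finite (cubeFamily_subset_LINSET hk) (cubeFamily_finite k)
    ⟨_, ∅, by simp, rfl⟩ (k - 1) ?_
  rintro _ ⟨A, hA, rfl⟩ T hT hTc
  obtain ⟨l, hl, hlT⟩ := exists_add_notMem_of_card_lt (Finset.card_image_le.trans_lt hTc)
    (U := T.image Prod.fst)
  refine ⟨cubeSet k (A ∆ {l}), symmDiff_singleton_mem_cubeFamily (Finset.mem_powerset.mp hA) hl,
    cubeSet_symmDiff_singleton_ne hl, fun p hp => ?_⟩
  have hpl : p.1 ≠ k + l := fun h => hlT (Finset.mem_image.mpr ⟨p, hp, h⟩)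
  simpa only [mem_cubeSet_symmDiff_singleton_iff hpl] using hT p hp

theorem le_PBTDpos_LINSET (hk : 1 ≤ k) : (k : ℕ∞) ≤ PBTDpos (LINSET k) := by
  refine le_PBTDpos_of_finite (F := insert (intervalSpan k) (cubeFamily k))
    (Set.insert_subset (intervalSpan_mem_LINSET hk) (cubeFamily_subset_LINSET hk))
    ((cubeFamily_finite k).insert _) (Set.insert_nonempty _ _) k ?_
  rintro _ (rfl | ⟨A, hA, rfl⟩) S hS hSc
  · exact ⟨_, Or.inr ⟨_, Finset.mem_powerset.mpr subset_rfl, rfl⟩, cubeSet_ne_intervalSpan hk _,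
      hS.trans intervalSpan_subset_cubeSet⟩
  by_cases hcube : ∀ l ∈ Finset.Icc 1 (k - 1), k + l ∈ S
  · exact ⟨_, Or.inl rfl, (cubeSet_ne_intervalSpan hk A).symm,
      subset_intervalSpan_of_card_lt hSc hcube⟩
  push Not at hcube
  obtain ⟨l, hl, hlS⟩ := hcube
  refine ⟨cubeSet k (A ∆ {l}), Or.inr (symmDiff_singleton_mem_cubeFamily
    (Finset.mem_powerset.mp hA) hl), cubeSet_symmDiff_singleton_ne hl, fun p hp => ?_⟩
  have hpl : p ≠ k + l := by rintro rfl; exact hlS hp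
  exact (mem_cubeSet_symmDiff_singleton_iff hpl).mpr (hS hp)

end Families

/-- `PBTD⁺(LINSET_k) = k` and `k − 1 ≤ PBTD(LINSET_k) ≤ k`. -/
theorem pbtd_linset (k : ℕ) (hk : 1 ≤ k) :
    PBTDpos (LINSET k) = (k : ℕ∞) ∧
    ((k - 1 : ℕ) : ℕ∞) ≤ PBTD (LINSET k) ∧ PBTD (LINSET k) ≤ (k : ℕ∞) :=
  ⟨le_antisymm (PBTDpos_LINSET_le k) (le_PBTDpos_LINSET hk), le_PBTD_LINSET hk,
    (PBTD_le_PBTDpos _).trans (PBTDpos_LINSET_le k)⟩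

end PBT
end

section
/- Let d ≥ 2 and 0 < h ≤ 1. For every w* in the unit sphere S_{d−1} of ℝ^d with d-th coordinate w*_d = h, there exists u ∈ ℝ^d \ {0} such that w* ∈ H_u and every w ∈ (S⁺_{d−1} ∩ H_u) \ {w*} satisfies w_d < h. -/
/-!
With `e` the north pole and `h = ⟪e, w*⟫`, take `u = h • w* - e`, the normal of the hyperplane
through `0` and `w*` tangent to the cap `{v | ⟪e, v⟫ ≥ h}`. For a unit vector `v ∈ H_u`
Cauchy–Schwarz gives `⟪e, v⟫ ≤ h ⟪w*, v⟫ ≤ h`, with equality only at `v = w*`.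
When `h = 1` this `u` vanishes, but then `w* = e` and any halfspace containing `w*` works.
-/

open RealInnerProductSpace

variable {F : Type*} [NormedAddCommGroup F] [InnerProductSpace ℝ F]

theorem real_inner_lt_of_inner_smul_sub_nonneg {e w v : F} (hw : ‖w‖ = 1) (hv : ‖v‖ = 1)
    (h0 : 0 < ⟪e, w⟫) (hu : 0 ≤ ⟪⟪e, w⟫ • w - e, v⟫) (hvw : v ≠ w) : ⟪e, v⟫ < ⟪e, w⟫ := by
  rw [inner_sub_left, real_inner_smul_left] at hu
  have hwv : ⟪w, v⟫ < 1 := (inner_lt_one_iff_real_of_norm_eq_one hw hv).2 hvw.symm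
  nlinarith

theorem exists_halfspace_touching_cap_at {e w : F} (he : ‖e‖ = 1) (hw : ‖w‖ = 1)
    (h0 : 0 < ⟪e, w⟫) :
    ∃ u : F, u ≠ 0 ∧ 0 ≤ ⟪u, w⟫ ∧
      ∀ v : F, ‖v‖ = 1 → 0 ≤ ⟪u, v⟫ → v ≠ w → ⟪e, v⟫ < ⟪e, w⟫ := by
  by_cases h1 : ⟪e, w⟫ = 1
  · obtain rfl : e = w := (inner_eq_one_iff_of_norm_eq_one he hw).1 h1
    refine ⟨e, norm_ne_zero_iff.1 (by simp [he]), by positivity, fun v hv _ hve => ?_⟩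
    rw [h1]
    exact (inner_lt_one_iff_real_of_norm_eq_one he hv).2 hve.symm
  · refine ⟨⟪e, w⟫ • w - e, fun hu => h1 ?_, ?_, fun v hv hu hvw =>
      real_inner_lt_of_inner_smul_sub_nonneg hw hv h0 hu hvw⟩
    · have hnorm := congrArg norm (sub_eq_zero.1 hu)
      rwa [norm_smul, hw, he, mul_one, Real.norm_of_nonneg h0.le] at hnorm
    · rw [inner_sub_left, real_inner_smul_left, real_inner_self_eq_norm_sq, hw,
        real_inner_comm]
      simp

/-- For `d ≥ 2`, `0 < h ≤ 1` and `w*` on the unit sphere of `ℝ^d` with `w*_d = h`,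
there is `u ≠ 0` with `w* ∈ H_u` (i.e. `⟨u,w*⟩ ≥ 0`) and such that every
`w ∈ (S⁺_{d−1} ∩ H_u) \ {w*}` satisfies `w_d < h`. -/
theorem close_to_northpole (d : ℕ) (hd : 2 ≤ d) (h : ℝ) (h0 : 0 < h)
    (w : EuclideanSpace ℝ (Fin d)) (hw : ‖w‖ = 1)
    (hwd : w (Fin.mk (d - 1) (by omega)) = h) :
    ∃ u : EuclideanSpace ℝ (Fin d), u ≠ 0 ∧ (0:ℝ) ≤ inner ℝ u w ∧
      ∀ v : EuclideanSpace ℝ (Fin d), ‖v‖ = 1 → 0 < v (Fin.mk (d - 1) (by omega)) →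
        (0:ℝ) ≤ inner ℝ u v → v ≠ w → v (Fin.mk (d - 1) (by omega)) < h := by
  set e : EuclideanSpace ℝ (Fin d) := EuclideanSpace.single ⟨d - 1, by omega⟩ 1
  have he : ‖e‖ = 1 := by simp [e]
  have inner_e (v : EuclideanSpace ℝ (Fin d)) : ⟪e, v⟫ = v ⟨d - 1, by omega⟩ := by
    simp [e, EuclideanSpace.inner_single_left]
  have hew : ⟪e, w⟫ = h := by rw [inner_e, hwd]
  obtain ⟨u, hu0, huw, hcap⟩ := exists_halfspace_touching_cap_at he hw (hew ▸ h0)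
  refine ⟨u, hu0, huw, fun v hv _ huv hvw => ?_⟩
  rw [← inner_e, ← hew]
  exact hcap v hv huv hvw
end

section
/- PBTD(𝓗₁⁰) = 1, and for every d ≥ 2, PBTD(𝓗_d⁰) = 2, where 𝓗_d⁰ is the class of homogeneous halfspaces of ℝ^d. -/
namespace PBT

variable {X : Type*}

/-- The class `𝓗_d⁰` of homogeneous halfspaces of `ℝ^d`. -/
def homHalfspaces (d : ℕ) : Set (Set (EuclideanSpace ℝ (Fin d))) :=
  {H | ∃ w : EuclideanSpace ℝ (Fin d), w ≠ 0 ∧ H = {x | (0:ℝ) ≤ inner ℝ w x}}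

/-!
In dimension `d ≥ 2`, the eight halfspaces whose normals point at the angles `n π / 4` form a
cycle in which the normals of the two neighbours of a halfspace add up to a positive multiple of
its own normal. Hence any single labelled example consistent with a halfspace is consistent with
one of its neighbours, and for every preference order the minimal halfspace of the cycle needs two
examples.

Conversely, prefer halfspaces whose unit normal `u` has its first nonzero coordinate `u i` as late
as possible, and then as large as possible in absolute value. The positive example
`u - (u i)⁻¹ • e i` and the negative example `u - 2 (u i)⁻¹ • e i` force every consistent unit
normal `v` to satisfy `0 < v i / u i ≤ ⟪v, u⟫ ≤ 1`; if `v` is not less preferred than `u`, then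
`|u i| ≤ |v i|`, so `⟪v, u⟫ = 1` and `v = u`.

In dimension one there are just two halfspaces, each taught by its own normal vector, and a class
with two concepts always needs one example.
-/

lemma consistent_empty (L : Set X) : Consistent L ∅ := by
  simp [Consistent]

lemma consistent_insert {L : Set X} {p : X × Bool} {T : Set (X × Bool)} :
    Consistent L (insert p T) ↔ (p.1 ∈ L ↔ p.2 = true) ∧ Consistent L T := by
  obtain ⟨x, _ | _⟩ := p <;> simp [Consistent]

lemma consistent_singleton {L : Set X} {x : X} {b : Bool} :
    Consistent L {(x, b)} ↔ (x ∈ L ↔ b = true) := by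
  rw [← insert_empty_eq, consistent_insert]
  simp [consistent_empty]

lemma consistent_pair_iff {L : Set X} {x y : X} :
    Consistent L {(x, true), (y, false)} ↔ x ∈ L ∧ y ∉ L := by
  simp [consistent_insert, consistent_singleton]

lemma TD_le_card {L : Set X} {𝓛 : Set (Set X)} {T : Finset (X × Bool)}
    (hT : IsTeachingSet 𝓛 L T) : TD L 𝓛 ≤ T.card :=
  sInf_le ⟨T, hT, rfl⟩

lemma exists_isTeachingSet_card_le {L : Set X} {𝓛 : Set (Set X)} {n : ℕ} (h : TD L 𝓛 ≤ n) :
    ∃ T : Finset (X × Bool), IsTeachingSet 𝓛 L T ∧ T.card ≤ n := by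
  have hne : {m : ℕ∞ | ∃ T : Finset (X × Bool), IsTeachingSet 𝓛 L T ∧ m = T.card}.Nonempty := by
    by_contra hempty
    rw [Set.not_nonempty_iff_eq_empty] at hempty
    simp [TD, hempty] at h
  obtain ⟨T, hT, hcard⟩ := csInf_mem hne
  exact ⟨T, hT, by rw [TD, hcard] at h; exact_mod_cast h⟩

lemma PBTD_le_PBTDord {𝓛 : Set (Set X)} {pr : Set X → Set X → Prop} (hpr : StrictPO pr) :
    PBTD 𝓛 ≤ PBTDord 𝓛 pr :=
  sInf_le ⟨pr, hpr, rfl⟩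

lemma le_PBTD {𝓛 : Set (Set X)} {n : ℕ∞} (h : ∀ pr, StrictPO pr → n ≤ PBTDord 𝓛 pr) :
    n ≤ PBTD 𝓛 :=
  le_sInf fun _ ⟨pr, hpr, hv⟩ => hv ▸ h pr hpr

lemma exists_isTeachingSet_of_PBTDord_le {𝓛 : Set (Set X)} {pr : Set X → Set X → Prop} {n : ℕ}
    (h : PBTDord 𝓛 pr ≤ n) {L : Set X} (hL : L ∈ 𝓛) :
    ∃ T : Finset (X × Bool), IsTeachingSet {L' ∈ 𝓛 | ¬ pr L' L} L T ∧ T.card ≤ n :=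
  exists_isTeachingSet_card_le (iSup₂_le_iff.1 h L hL)

lemma StrictPO.exists_minimal_of_periodic {pr : Set X → Set X → Prop} (hpr : StrictPO pr)
    {f : ℕ → Set X} {N : ℕ} (hN : 0 < N) (hf : Function.Periodic f N) :
    ∃ n, ∀ m, ¬ pr (f m) (f n) := by
  have : IsStrictOrder (Set X) pr := { irrefl := hpr.1, trans := hpr.2 }
  have hfin : (Set.range f).Finite := by
    refine (Set.finite_range fun i : Fin N => f i).subset ?_
    rintro _ ⟨m, rfl⟩
    exact ⟨⟨m % N, Nat.mod_lt m hN⟩, hf.map_mod_nat m⟩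
  obtain ⟨⟨_, n, rfl⟩, -, hmin⟩ :=
    (hfin.wellFoundedOn (r := pr)).has_min Set.univ ⟨⟨f 0, 0, rfl⟩, trivial⟩
  exact ⟨n, fun m hm => hmin ⟨f m, m, rfl⟩ trivial hm⟩

lemma pos_PBTDord_of_ne {𝓛 : Set (Set X)} {pr : Set X → Set X → Prop} (hpr : StrictPO pr)
    {L₁ L₂ : Set X} (h₁ : L₁ ∈ 𝓛) (h₂ : L₂ ∈ 𝓛) (hne : L₁ ≠ L₂) : 0 < PBTDord 𝓛 pr := by
  by_contra! h
  have below : ∀ {L L'}, L ∈ 𝓛 → L' ∈ 𝓛 → L' ≠ L → pr L' L := by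
    intro L L' hL hL' hL'L
    obtain ⟨T, hT, hcard⟩ := exists_isTeachingSet_of_PBTDord_le (n := 0) (by simpa using h) hL
    obtain rfl : T = ∅ := Finset.card_eq_zero.1 (Nat.le_zero.1 hcard)
    by_contra hnot
    exact hL'L (hT.2 L' ⟨hL', hnot⟩ (by simpa using consistent_empty L'))
  exact hpr.1 _ (hpr.2 _ _ _ (below h₂ h₁ hne) (below h₁ h₂ hne.symm))

lemma one_lt_PBTDord_of_periodic {𝓛 : Set (Set X)} {pr : Set X → Set X → Prop}
    (hpr : StrictPO pr) {f : ℕ → Set X} {N : ℕ} (hN : 0 < N) (hf : Function.Periodic f N)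
    (hmem : ∀ n, f n ∈ 𝓛) (hne : ∀ n, f n ≠ f (n + 1))
    (hsplit : ∀ n p,
      Consistent (f (n + 1)) {p} → Consistent (f n) {p} ∨ Consistent (f (n + 2)) {p}) :
    1 < PBTDord 𝓛 pr := by
  by_contra! h
  obtain ⟨k, hmin⟩ := hpr.exists_minimal_of_periodic hN hf
  set n := k + N - 1
  have hn : f (n + 1) = f k := by rw [show n + 1 = k + N by omega]; exact hf k
  obtain ⟨T, hT, hcard⟩ :=
    exists_isTeachingSet_of_PBTDord_le (n := 1) (by exact_mod_cast h) (hmem (n + 1))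
  have hT' : Consistent (f n) T ∨ Consistent (f (n + 2)) T := by
    have hsub : (T : Set (X × Bool)).Subsingleton :=
      fun a ha b hb => Finset.card_le_one.1 hcard a ha b hb
    rcases hsub.eq_empty_or_singleton with hempty | ⟨p, hp⟩
    · exact .inl (hempty ▸ consistent_empty _)
    · rw [hp] at hT ⊢
      exact hsplit n p hT.1
  rcases hT' with hc | hc
  · exact hne n (hT.2 _ ⟨hmem n, hn ▸ hmin n⟩ hc)
  · exact hne (n + 1) (hT.2 _ ⟨hmem (n + 2), hn ▸ hmin (n + 2)⟩ hc).symm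

open scoped RealInnerProductSpace

section Halfspaces

variable {E : Type*} [NormedAddCommGroup E] [InnerProductSpace ℝ E]

def halfspace (w : E) : Set E := {x | 0 ≤ ⟪w, x⟫}

variable (E) in
def halfspaces : Set (Set E) := {H | ∃ w : E, w ≠ 0 ∧ H = halfspace w}

lemma mem_halfspace {w x : E} : x ∈ halfspace w ↔ 0 ≤ ⟪w, x⟫ := Iff.rfl

lemma halfspace_mem_halfspaces {w : E} (hw : w ≠ 0) : halfspace w ∈ halfspaces E :=
  ⟨w, hw, rfl⟩

lemma halfspace_smul {w : E} {c : ℝ} (hc : 0 < c) : halfspace (c • w) = halfspace w := by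
  ext x
  simp only [mem_halfspace, real_inner_smul_left]
  exact mul_nonneg_iff_of_pos_left hc

lemma exists_norm_eq_one_of_mem_halfspaces {L : Set E} (hL : L ∈ halfspaces E) :
    ∃ u : E, ‖u‖ = 1 ∧ L = halfspace u := by
  obtain ⟨w, hw, rfl⟩ := hL
  have hw' : 0 < ‖w‖ := norm_pos_iff.2 hw
  exact ⟨‖w‖⁻¹ • w, by simp [norm_smul, hw'.ne'], (halfspace_smul (inv_pos.2 hw')).symm⟩

lemma halfspace_ne_halfspace_neg {w : E} (hw : w ≠ 0) : halfspace w ≠ halfspace (-w) := by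
  intro h
  have hw' : w ∈ halfspace (-w) := h ▸ real_inner_self_nonneg
  rw [mem_halfspace, inner_neg_left, neg_nonneg] at hw'
  exact hw (inner_self_eq_zero.1 (le_antisymm hw' real_inner_self_nonneg))

/-- `-(v - ⟪u, v⟫ • u)` lies on the boundary of `halfspace u`, hence in `halfspace v`, which
forces `1 ≤ ⟪u, v⟫ ^ 2`. -/
lemma eq_of_halfspace_subset {u v : E} (hu : ‖u‖ = 1) (hv : ‖v‖ = 1)
    (h : halfspace u ⊆ halfspace v) : u = v := by
  set t := ⟪u, v⟫
  have huu : ⟪u, u⟫ = 1 := by rw [real_inner_self_eq_norm_sq, hu, one_pow]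
  have hvv : ⟪v, v⟫ = 1 := by rw [real_inner_self_eq_norm_sq, hv, one_pow]
  have ht₀ : 0 ≤ t := by
    have hvu : 0 ≤ ⟪v, u⟫ := h (mem_halfspace.2 real_inner_self_nonneg)
    rwa [real_inner_comm] at hvu
  have ht₁ : t ≤ 1 := by simpa [hu, hv] using real_inner_le_norm u v
  have hsq : 1 ≤ t ^ 2 := by
    have hz : -(v - t • u) ∈ halfspace v := h (by
      simp only [mem_halfspace, inner_neg_right, inner_sub_right, real_inner_smul_right, huu]
      simp [t])
    simp only [mem_halfspace, inner_neg_right, inner_sub_right, real_inner_smul_right, hvv,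
      real_inner_comm u v] at hz
    nlinarith
  exact (inner_eq_one_iff_of_norm_eq_one hu hv).1 (show t = 1 by nlinarith)

noncomputable def unitNormal (A : Set E) : E :=
  Classical.epsilon fun u => ‖u‖ = 1 ∧ A = halfspace u

lemma unitNormal_halfspace {u : E} (hu : ‖u‖ = 1) : unitNormal (halfspace u) = u := by
  obtain ⟨hn, heq⟩ := Classical.epsilon_spec (p := fun w => ‖w‖ = 1 ∧ halfspace u = halfspace w)
    ⟨u, hu, rfl⟩
  exact (eq_of_halfspace_subset hu hn heq.le).symm

lemma consistent_halfspace_of_add_eq_smul {u v w : E} {c : ℝ} (hc : 0 < c) (h : u + w = c • v)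
    {p : E × Bool} (hp : Consistent (halfspace v) {p}) :
    Consistent (halfspace u) {p} ∨ Consistent (halfspace w) {p} := by
  obtain ⟨x, b⟩ := p
  have hsum : ⟪u, x⟫ + ⟪w, x⟫ = c * ⟪v, x⟫ := by
    rw [← inner_add_left, h, real_inner_smul_left]
  simp only [consistent_singleton, mem_halfspace] at hp ⊢
  cases b
  · simp only [Bool.false_eq_true, iff_false, not_le] at hp ⊢
    by_contra! hno
    nlinarith [hno.1, hno.2]
  · simp only [iff_true] at hp ⊢
    by_contra! hno
    nlinarith [hno.1, hno.2]

lemma pos_PBTDord_halfspaces [Nontrivial E] {pr : Set E → Set E → Prop} (hpr : StrictPO pr) :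
    0 < PBTDord (halfspaces E) pr := by
  obtain ⟨w, hw⟩ := exists_ne (0 : E)
  exact pos_PBTDord_of_ne hpr (halfspace_mem_halfspaces hw)
    (halfspace_mem_halfspaces (neg_ne_zero.2 hw)) (halfspace_ne_halfspace_neg hw)

end Halfspaces

section Rotation

open Real

variable {E : Type*} [NormedAddCommGroup E] [InnerProductSpace ℝ E] {e₀ e₁ : E}

noncomputable def rot (e₀ e₁ : E) (θ : ℝ) : E := cos θ • e₀ + sin θ • e₁

lemma inner_rot_rot (h₀ : ‖e₀‖ = 1) (h₁ : ‖e₁‖ = 1) (h₀₁ : ⟪e₀, e₁⟫ = 0) (a b : ℝ) :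
    ⟪rot e₀ e₁ a, rot e₀ e₁ b⟫ = cos (a - b) := by
  have h₁₀ : ⟪e₁, e₀⟫ = 0 := by rw [real_inner_comm, h₀₁]
  simp only [rot, inner_add_left, inner_add_right, real_inner_smul_left, real_inner_smul_right,
    real_inner_self_eq_norm_sq, h₀, h₁, h₀₁, h₁₀, cos_sub]
  ring

lemma norm_rot (h₀ : ‖e₀‖ = 1) (h₁ : ‖e₁‖ = 1) (h₀₁ : ⟪e₀, e₁⟫ = 0) (θ : ℝ) :
    ‖rot e₀ e₁ θ‖ = 1 := by
  have h := inner_rot_rot h₀ h₁ h₀₁ θ θ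
  rwa [sub_self, cos_zero, real_inner_self_eq_norm_sq,
    pow_eq_one_iff_of_nonneg (norm_nonneg _) two_ne_zero] at h

lemma rot_sub_add_rot_add (θ h : ℝ) :
    rot e₀ e₁ (θ - h) + rot e₀ e₁ (θ + h) = (2 * cos h) • rot e₀ e₁ θ := by
  rw [rot, rot, rot, add_add_add_comm, ← add_smul, ← add_smul, smul_add, smul_smul, smul_smul,
    cos_sub, cos_add, sin_sub, sin_add]
  congr 2 <;> ring

lemma rot_add_two_pi (θ : ℝ) : rot e₀ e₁ (θ + 2 * π) = rot e₀ e₁ θ := by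
  simp only [rot, cos_add_two_pi, sin_add_two_pi]

lemma one_lt_PBTDord_halfspaces (h₀ : ‖e₀‖ = 1) (h₁ : ‖e₁‖ = 1) (h₀₁ : ⟪e₀, e₁⟫ = 0)
    {pr : Set E → Set E → Prop} (hpr : StrictPO pr) : 1 < PBTDord (halfspaces E) pr := by
  have hnorm := norm_rot h₀ h₁ h₀₁
  refine one_lt_PBTDord_of_periodic (f := fun n : ℕ => halfspace (rot e₀ e₁ (n * (π / 4)))) hpr
    (N := 8) (by norm_num) (fun n => ?periodic)
    (fun n => halfspace_mem_halfspaces (norm_ne_zero_iff.1 (by rw [hnorm]; exact one_ne_zero)))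
    (fun n hn => ?distinct) (fun n p hp => ?split)
  case periodic =>
    show halfspace (rot e₀ e₁ ((n + 8 : ℕ) * (π / 4))) = halfspace (rot e₀ e₁ (n * (π / 4)))
    rw [show ((n + 8 : ℕ) : ℝ) * (π / 4) = n * (π / 4) + 2 * π by push_cast; ring, rot_add_two_pi]
  case distinct =>
    have h := inner_rot_rot h₀ h₁ h₀₁ (n * (π / 4)) ((n + 1 : ℕ) * (π / 4))
    rw [← eq_of_halfspace_subset (hnorm _) (hnorm _) hn.le, real_inner_self_eq_norm_sq, hnorm,
      show (n : ℝ) * (π / 4) - (n + 1 : ℕ) * (π / 4) = -(π / 4) by push_cast; ring, cos_neg,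
      cos_pi_div_four] at h
    nlinarith [sq_sqrt (zero_le_two (α := ℝ))]
  case split =>
    refine consistent_halfspace_of_add_eq_smul (v := rot e₀ e₁ ((n + 1 : ℕ) * (π / 4)))
      (c := 2 * cos (π / 4)) (by rw [cos_pi_div_four]; positivity) ?_ hp
    convert rot_sub_add_rot_add ((n + 1 : ℕ) * (π / 4)) (π / 4) using 3 <;> push_cast <;> ring

end Rotation

section TeachingPair

variable {E : Type*} [NormedAddCommGroup E] [InnerProductSpace ℝ E]

def teachingPair (u q : E) : Set (E × Bool) :=
  {(u - ⟪u, q⟫⁻¹ • q, true), (u - (2 * ⟪u, q⟫⁻¹) • q, false)}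

lemma consistent_teachingPair_self {u q : E} (hu : ‖u‖ = 1) (hq : ⟪u, q⟫ ≠ 0) :
    Consistent (halfspace u) (teachingPair u q) := by
  simp only [teachingPair, consistent_pair_iff, mem_halfspace, inner_sub_right,
    real_inner_smul_right, real_inner_self_eq_norm_sq, hu, mul_assoc, inv_mul_cancel₀ hq]
  norm_num

lemma pos_and_le_inner_of_consistent_teachingPair {u v q : E}
    (h : Consistent (halfspace v) (teachingPair u q)) :
    0 < ⟪u, q⟫⁻¹ * ⟪v, q⟫ ∧ ⟪u, q⟫⁻¹ * ⟪v, q⟫ ≤ ⟪v, u⟫ := by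
  simp only [teachingPair, consistent_pair_iff, mem_halfspace, inner_sub_right,
    real_inner_smul_right, not_le] at h
  constructor <;> nlinarith [h.1, h.2]

lemma eq_of_consistent_teachingPair {u v q : E} (hu : ‖u‖ = 1) (hv : ‖v‖ = 1)
    (h : Consistent (halfspace v) (teachingPair u q)) (habs : |⟪u, q⟫| ≤ |⟪v, q⟫|) : v = u := by
  obtain ⟨hpos, hle⟩ := pos_and_le_inner_of_consistent_teachingPair h
  have hq : ⟪u, q⟫ ≠ 0 := by rintro hq; simp [hq] at hpos
  have hone : 1 ≤ ⟪u, q⟫⁻¹ * ⟪v, q⟫ := by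
    rw [← abs_of_pos hpos, abs_mul, abs_inv, le_inv_mul_iff₀ (abs_pos.2 hq), mul_one]
    exact habs
  have hvu : ⟪v, u⟫ ≤ 1 := by simpa [hu, hv] using real_inner_le_norm v u
  exact (inner_eq_one_iff_of_norm_eq_one hv hu).1 (le_antisymm hvu (hone.trans hle))

end TeachingPair

lemma abs_le_abs_of_toLex_inv_abs_le {ι : Type*} [LinearOrder ι] [WellFoundedLT ι]
    {u v : ι → ℝ} {i : ι} (hu : ∀ j < i, u j = 0) (hv : v i ≠ 0)
    (h : toLex (fun j => |v j|⁻¹) ≤ toLex (fun j => |u j|⁻¹)) : |u i| ≤ |v i| := by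
  suffices hinv : |v i|⁻¹ ≤ |u i|⁻¹ by
    rcases eq_or_ne (u i) 0 with hui | hui
    · simp [hui]
    · exact (inv_le_inv₀ (abs_pos.2 hv) (abs_pos.2 hui)).1 hinv
  rcases h.lt_or_eq with ⟨k, hk, hlt⟩ | heq
  · change ∀ j < k, |v j|⁻¹ = |u j|⁻¹ at hk
    change |v k|⁻¹ < |u k|⁻¹ at hlt
    rcases lt_trichotomy k i with hki | rfl | hik
    · rw [hu k hki, abs_zero, inv_zero] at hlt
      exact absurd hlt (inv_nonneg.2 (abs_nonneg _)).not_gt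
    · exact hlt.le
    · exact (hk i hik).le
  · exact (congrFun (toLex.injective heq) i).le

section LexPref

variable {ι : Type*} [Fintype ι] [LinearOrder ι]

variable (ι) in
/-- As `0⁻¹ = 0`, a lexicographically smaller `|u i|⁻¹` means a later first nonzero coordinate
of the unit normal `u`, and then a larger absolute value of it. -/
def lexPref (A B : Set (EuclideanSpace ℝ ι)) : Prop :=
  toLex (fun i => |unitNormal B i|⁻¹) < toLex (fun i => |unitNormal A i|⁻¹)

lemma strictPO_lexPref : StrictPO (lexPref ι) :=
  ⟨fun _ => lt_irrefl _, fun _ _ _ h₁ h₂ => h₂.trans h₁⟩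

lemma exists_first_ne_zero {u : EuclideanSpace ℝ ι} (hu : u ≠ 0) :
    ∃ i, u i ≠ 0 ∧ ∀ j < i, u j = 0 := by
  obtain ⟨i₀, hi₀⟩ : ∃ i, u i ≠ 0 := by
    by_contra! h
    exact hu (PiLp.ext h)
  obtain ⟨i, hi, hmin⟩ := wellFounded_lt.has_min {i | u i ≠ 0} ⟨i₀, hi₀⟩
  exact ⟨i, hi, fun j hj => by_contra fun hj' => hmin j hj' hj⟩

lemma TD_halfspace_lexPref_le_two {u : EuclideanSpace ℝ ι} (hu : ‖u‖ = 1) :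
    TD (halfspace u) {L ∈ halfspaces _ | ¬ lexPref ι L (halfspace u)} ≤ 2 := by
  classical
  obtain ⟨i, hi, hbefore⟩ := exists_first_ne_zero (norm_ne_zero_iff.1 (hu ▸ one_ne_zero))
  set q : EuclideanSpace ℝ ι := EuclideanSpace.single i 1
  have hq (w : EuclideanSpace ℝ ι) : ⟪w, q⟫ = w i := by
    simp [q, EuclideanSpace.inner_single_right]
  let T : Finset (EuclideanSpace ℝ ι × Bool) :=
    {(u - ⟪u, q⟫⁻¹ • q, true), (u - (2 * ⟪u, q⟫⁻¹) • q, false)}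
  have hT : (T : Set _) = teachingPair u q := by simp [T, teachingPair]
  refine (TD_le_card (T := T) ⟨?_, ?_⟩).trans (by exact_mod_cast Finset.card_le_two)
  · rw [hT]
    exact consistent_teachingPair_self hu (by rwa [hq])
  · rintro L ⟨hL, hnot⟩ hcons
    obtain ⟨v, hv, rfl⟩ := exists_norm_eq_one_of_mem_halfspaces hL
    rw [hT] at hcons
    have hvi : v i ≠ 0 := by
      have hpos := (pos_and_le_inner_of_consistent_teachingPair hcons).1
      rintro hvi
      simp [hq v, hvi] at hpos
    rw [lexPref, unitNormal_halfspace hu, unitNormal_halfspace hv] at hnot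
    have habs := abs_le_abs_of_toLex_inv_abs_le hbefore hvi (not_lt.1 hnot)
    rw [← hq, ← hq] at habs
    exact congrArg halfspace (eq_of_consistent_teachingPair hu hv hcons habs)

lemma PBTDord_lexPref_le_two : PBTDord (halfspaces (EuclideanSpace ℝ ι)) (lexPref ι) ≤ 2 :=
  iSup₂_le fun L hL => by
    obtain ⟨u, hu, rfl⟩ := exists_norm_eq_one_of_mem_halfspaces hL
    exact TD_halfspace_lexPref_le_two hu

end LexPref

lemma halfspace_eq_of_mem_halfspace_fin_one {w w' : EuclideanSpace ℝ (Fin 1)} (hw : w ≠ 0)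
    (hw' : w' ≠ 0) (h : w ∈ halfspace w') : halfspace w' = halfspace w := by
  have hw0 : w 0 ≠ 0 := fun h0 => hw (by ext i; fin_cases i; exact h0)
  obtain ⟨c, rfl⟩ : ∃ c : ℝ, w' = c • w := ⟨w' 0 / w 0, by ext i; fin_cases i; simp [hw0]⟩
  have hc : c ≠ 0 := by rintro rfl; simp at hw'
  rw [mem_halfspace, real_inner_smul_left] at h
  exact halfspace_smul
    (lt_of_le_of_ne (nonneg_of_mul_nonneg_left h (real_inner_self_pos.2 hw)) hc.symm)

lemma PBTDord_halfspaces_fin_one_le_one :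
    PBTDord (halfspaces (EuclideanSpace ℝ (Fin 1))) (fun _ _ => False) ≤ 1 := by
  classical
  refine iSup₂_le fun L hL => ?_
  obtain ⟨w, hw, rfl⟩ := hL
  refine (TD_le_card (T := {(w, true)}) ⟨?_, ?_⟩).trans (by simp)
  · simp [consistent_singleton, mem_halfspace]
  · rintro _ ⟨⟨w', hw', rfl⟩, -⟩ hcons
    simp only [Finset.coe_singleton, consistent_singleton, iff_true] at hcons
    exact halfspace_eq_of_mem_halfspace_fin_one hw hw' hcons

/-- `PBTD(𝓗₁⁰) = 1` and `PBTD(𝓗_d⁰) = 2` for every `d ≥ 2`. -/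
theorem pbtd_homHalfspaces :
    PBTD (homHalfspaces 1) = 1 ∧ ∀ d : ℕ, 2 ≤ d → PBTD (homHalfspaces d) = 2 := by
  refine ⟨le_antisymm ?_ ?_, fun d hd => le_antisymm ?_ ?_⟩
  · exact (PBTD_le_PBTDord ⟨fun _ h => h, fun _ _ _ h _ => h⟩).trans
      PBTDord_halfspaces_fin_one_le_one
  · exact le_PBTD fun pr hpr => Order.one_le_iff_pos.2 (pos_PBTDord_halfspaces hpr)
  · exact (PBTD_le_PBTDord strictPO_lexPref).trans PBTDord_lexPref_le_two
  · exact le_PBTD fun pr hpr => Order.add_one_le_of_lt (one_lt_PBTDord_halfspaces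
      (e₀ := EuclideanSpace.single ⟨0, by omega⟩ 1) (e₁ := EuclideanSpace.single ⟨1, by omega⟩ 1)
      (by simp) (by simp) (by simp [EuclideanSpace.inner_single_right, Fin.ext_iff]) hpr)

end PBT
end

section
/- For every d ≥ 2 and every H ∈ 𝓗_d⁰, TD(H, 𝓗_d⁰) = d + 1; consequently TD(𝓗_d⁰) = RTD(𝓗_d⁰) = d + 1, where 𝓗_d⁰ is the class of homogeneous halfspaces of ℝ^d. -/
namespace PBT

variable {X : Type*}

/-- A teaching sequence for `𝓛`: a (finite or infinite) partition of `𝓛` into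
sub-classes `P 0, P 1, …` (a finite sequence is modelled by letting the
remaining parts be empty). -/
def IsTeachingSeq (𝓛 : Set (Set X)) (P : ℕ → Set (Set X)) : Prop :=
  (∀ i j, i ≠ j → Disjoint (P i) (P j)) ∧ (⋃ i, P i) = 𝓛

/-- the order `sup_i sup_{L ∈ P i} TD(L, 𝓛 \ (P 0 ∪ ⋯ ∪ P (i-1)))` of a teaching sequence. -/
noncomputable def seqOrder (𝓛 : Set (Set X)) (P : ℕ → Set (Set X)) : ℕ∞ :=
  ⨆ i, ⨆ L ∈ P i, TD L (𝓛 \ ⋃ j < i, P j)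

/-- the recursive teaching dimension of `𝓛`. -/
noncomputable def RTD (𝓛 : Set (Set X)) : ℕ∞ :=
  sInf {v : ℕ∞ | ∃ P, IsTeachingSeq 𝓛 P ∧ v = seqOrder 𝓛 P}

/-- `TD(𝓛) = sup_{L ∈ 𝓛} TD(L, 𝓛)`. -/
noncomputable def TDclass (𝓛 : Set (Set X)) : ℕ∞ := ⨆ L ∈ 𝓛, TD L 𝓛

open Module
open scoped RealInnerProductSpace

section Aux

lemma exists_dual_vec {F : Type*} [NormedAddCommGroup F] [InnerProductSpace ℝ F]
    [FiniteDimensional ℝ F]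
    (hd : 2 ≤ finrank ℝ F) (w : F) (Z : Finset F) (hwZ : w ∉ Z)
    (hcard : Z.card + 1 ≤ finrank ℝ F) :
    ∃ u : F, u ≠ 0 ∧ ⟪w, u⟫ = 0 ∧ ∀ p ∈ Z, 0 ≤ ⟪p, u⟫ := by
  classical
  set S : Finset F := insert w Z with hS
  by_cases hspan : Submodule.span ℝ (S : Set F) = ⊤
  · have hScard : S.card = Z.card + 1 := Finset.card_insert_of_notMem hwZ
    have hrank_le : finrank ℝ F ≤ S.card := by
      have h1 := finrank_span_finset_le_card (R := ℝ) S
      rw [Set.finrank, hspan, finrank_top] at h1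
      exact h1
    have hcardeq : Fintype.card ↥S = finrank ℝ F := by
      rw [Fintype.card_coe]; omega
    have hle_span : ⊤ ≤ Submodule.span ℝ (Set.range (fun x : ↥S => (x : F))) := by
      rw [Subtype.range_coe_subtype]
      simpa using hspan.ge
    set B := basisOfTopLeSpanOfCardEqFinrank (fun x : ↥S => (x : F)) hle_span hcardeq with hB
    have hBcoe : ∀ i : ↥S, B i = (i : F) := fun i => by
      rw [hB, coe_basisOfTopLeSpanOfCardEqFinrank]
    set t : ↥S → ℝ := fun x => if (x : F) = w then 0 else 1 with ht
    set ψ : F →ₗ[ℝ] ℝ := B.constr ℝ t with hψ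
    set u : F := (InnerProductSpace.toDual ℝ F).symm (LinearMap.toContinuousLinearMap ψ) with hu
    have huinner : ∀ x : F, ⟪u, x⟫ = ψ x := fun x => by
      rw [hu, InnerProductSpace.toDual_symm_apply]; rfl
    have hψS : ∀ (x : F) (hx : x ∈ S), ψ x = t ⟨x, hx⟩ := by
      intro x hx
      have := B.constr_basis ℝ t ⟨x, hx⟩
      rwa [hBcoe] at this
    have hψw : ψ w = 0 := by
      rw [hψS w (Finset.mem_insert_self w Z)]; simp [ht]
    have hψZ : ∀ p ∈ Z, ψ p = 1 := by
      intro p hp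
      rw [hψS p (Finset.mem_insert_of_mem hp)]
      have : p ≠ w := fun h => hwZ (h ▸ hp)
      simp [ht, this]
    obtain ⟨p, hp⟩ : Z.Nonempty := by
      rw [← Finset.card_pos]; omega
    refine ⟨u, ?_, ?_, ?_⟩
    · intro h
      have := huinner p
      rw [h, inner_zero_left, hψZ p hp] at this
      norm_num at this
    · rw [real_inner_comm, huinner, hψw]
    · intro q hq
      rw [real_inner_comm, huinner, hψZ q hq]
      norm_num
  · set K := Submodule.span ℝ (S : Set F) with hK
    have : Kᗮ ≠ ⊥ := fun h => hspan (Submodule.orthogonal_eq_bot_iff.mp h)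
    obtain ⟨u, huK, hu0⟩ := (Submodule.ne_bot_iff _).mp this
    rw [Submodule.mem_orthogonal] at huK
    refine ⟨u, hu0, ?_, ?_⟩
    · exact huK w (Submodule.subset_span (by simp [hS]))
    · intro p hp
      rw [huK p (Submodule.subset_span (by simp [hS, hp]))]

/-- Upper bound: an explicit teaching set of size `d+1`. -/
lemma exists_teaching_finset (d : ℕ) (hd : 2 ≤ d) (w : EuclideanSpace ℝ (Fin d)) (hw : w ≠ 0) :
    ∃ T : Finset (EuclideanSpace ℝ (Fin d) × Bool),
      IsTeachingSet (homHalfspaces d) {x | (0:ℝ) ≤ inner ℝ w x} ↑T ∧ T.card = d + 1 := by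
  classical
  haveI : NeZero d := ⟨by omega⟩
  have hnorm : (0:ℝ) < ‖w‖ := norm_pos_iff.mpr hw
  have hcard : finrank ℝ (EuclideanSpace ℝ (Fin d)) = Fintype.card (Fin d) := by
    simp [finrank_euclideanSpace_fin]
  have horth : Orthonormal ℝ (Set.restrict {(0 : Fin d)}
      (fun _ => ‖w‖⁻¹ • w : Fin d → EuclideanSpace ℝ (Fin d))) := by
    constructor
    · intro i
      exact (by simpa using norm_smul_inv_norm (𝕜 := ℝ) hw : ‖‖w‖⁻¹ • w‖ = 1)
    · intro i j hij
      exact absurd (Subtype.ext (by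
        have hi := i.2; have hj := j.2
        simp only [Set.mem_singleton_iff] at hi hj
        rw [hi, hj])) hij
  obtain ⟨b, hb0⟩ := Orthonormal.exists_orthonormalBasis_extension_of_card_eq hcard horth
  have hb0' : b 0 = ‖w‖⁻¹ • w := hb0 0 rfl
  have hwb : w = ‖w‖ • b 0 := by
    rw [hb0', smul_smul, mul_inv_cancel₀ (ne_of_gt hnorm), one_smul]
  have hib : ∀ i j : Fin d, ⟪b i, b j⟫ = if i = j then 1 else 0 :=
    orthonormal_iff_ite.mp b.orthonormal
  set q : EuclideanSpace ℝ (Fin d) := b 0 - ∑ i, b i with hq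
  have hbq : ∀ j : Fin d, ⟪b j, q⟫ = (if j = 0 then 1 else 0) - 1 := by
    intro j
    rw [hq, inner_sub_right, inner_sum]
    simp [hib]
  have hwinner : ∀ x : EuclideanSpace ℝ (Fin d), ⟪w, x⟫ = ‖w‖ * ⟪b 0, x⟫ := by
    intro x
    conv_lhs => rw [hwb]
    rw [real_inner_smul_left]
  have hbinj : Function.Injective b := by
    have := b.toBasis.injective
    rwa [OrthonormalBasis.coe_toBasis] at this
  set T : Finset (EuclideanSpace ℝ (Fin d) × Bool) :=
    insert (q, true) (Finset.univ.image fun i : Fin d => (b i, true)) with hT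
  have hqnot : (q, true) ∉ (Finset.univ.image fun i : Fin d => (b i, true)) := by
    intro hmem
    obtain ⟨i, -, hi⟩ := Finset.mem_image.mp hmem
    have hqi : b i = q := congrArg Prod.fst hi
    have h1 := hbq i
    rw [← hqi] at h1
    have h2 := hib i i
    rw [if_pos rfl] at h2
    rw [h2] at h1
    split at h1 <;> norm_num at h1
  have hTcard : T.card = d + 1 := by
    rw [hT, Finset.card_insert_of_notMem hqnot,
      Finset.card_image_of_injective _ (fun i j h => hbinj (congrArg Prod.fst h)),
      Finset.card_univ, Fintype.card_fin]
  refine ⟨T, ⟨?_, ?_⟩, hTcard⟩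
  · -- Consistent
    intro p hp
    have hp' : p ∈ T := Finset.mem_coe.mp hp
    rw [hT, Finset.mem_insert, Finset.mem_image] at hp'
    constructor
    · intro _
      show (0:ℝ) ≤ inner ℝ w p.1
      rcases hp' with h | ⟨i, -, h⟩
      · have : p.1 = q := congrArg Prod.fst h
        rw [this, hwinner, hbq 0, if_pos rfl]
        norm_num
      · have : p.1 = b i := (congrArg Prod.fst h).symm
        rw [this, hwinner, hib 0 i]
        split <;> positivity
    · intro hf
      rcases hp' with h | ⟨i, -, h⟩
      · have : p.2 = true := congrArg Prod.snd h
        rw [this] at hf; exact absurd hf (by simp)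
      · have : p.2 = true := (congrArg Prod.snd h).symm
        rw [this] at hf; exact absurd hf (by simp)
  · -- uniqueness
    rintro L' ⟨w', hw'0, rfl⟩ hcons
    have hmemq : ((q, true) : EuclideanSpace ℝ (Fin d) × Bool) ∈ (T : Set _) :=
      Finset.mem_coe.mpr (by rw [hT]; exact Finset.mem_insert_self _ _)
    have hmemb : ∀ i : Fin d, ((b i, true) : EuclideanSpace ℝ (Fin d) × Bool) ∈ (T : Set _) :=
      fun i => Finset.mem_coe.mpr (by
        rw [hT]
        exact Finset.mem_insert_of_mem (Finset.mem_image.mpr ⟨i, Finset.mem_univ i, rfl⟩))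
    have hq' : (0:ℝ) ≤ inner ℝ w' q := (hcons _ hmemq).1 rfl
    have hbi : ∀ i, (0:ℝ) ≤ inner ℝ w' (b i) := fun i => (hcons _ (hmemb i)).1 rfl
    set c : Fin d → ℝ := fun i => ⟪b i, w'⟫ with hc
    have hcnn : ∀ i, 0 ≤ c i := fun i => by
      rw [hc]; dsimp only; rw [← real_inner_comm]; exact hbi i
    have hqc : (inner ℝ w' q : ℝ) = c 0 - ∑ i, c i := by
      rw [hq, inner_sub_right, inner_sum, hc]
      simp only [real_inner_comm w']
    have hsum : ∑ i, c i = c 0 + ∑ i ∈ Finset.univ.erase 0, c i :=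
      (Finset.add_sum_erase _ c (Finset.mem_univ 0)).symm
    have hzero : ∀ i ∈ Finset.univ.erase (0 : Fin d), c i = 0 := by
      rw [← Finset.sum_eq_zero_iff_of_nonneg (fun i _ => hcnn i)]
      have : (0:ℝ) ≤ c 0 - ∑ i, c i := hqc ▸ hq'
      have h2 : (0:ℝ) ≤ ∑ i ∈ Finset.univ.erase 0, c i :=
        Finset.sum_nonneg fun i _ => hcnn i
      rw [hsum] at this
      linarith
    have hw'eq : w' = c 0 • b 0 := by
      have hr := b.sum_repr w'
      have : ∀ i, b.repr w' i = c i := fun i => by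
        rw [OrthonormalBasis.repr_apply_apply, hc]
      rw [Finset.sum_congr rfl (fun i _ => by rw [this i])] at hr
      rw [← hr]
      apply Finset.sum_eq_single_of_mem 0 (Finset.mem_univ 0)
      intro i _ hi
      rw [hzero i (Finset.mem_erase.mpr ⟨hi, Finset.mem_univ i⟩), zero_smul]
    have hc0 : 0 < c 0 := by
      rcases lt_or_eq_of_le (hcnn 0) with h | h
      · exact h
      · exfalso; apply hw'0; rw [hw'eq, ← h, zero_smul]
    ext x
    simp only [Set.mem_setOf_eq]
    rw [hw'eq]
    show (0:ℝ) ≤ inner ℝ (c 0 • b 0) x ↔ (0:ℝ) ≤ inner ℝ w x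
    rw [real_inner_smul_left, hwinner x, mul_nonneg_iff_of_pos_left hc0,
      mul_nonneg_iff_of_pos_left hnorm]

/-- Lower bound: every teaching set has at least `d+1` elements. -/
lemma teaching_card_ge (d : ℕ) (hd : 2 ≤ d) (w : EuclideanSpace ℝ (Fin d)) (hw : w ≠ 0)
    (T : Finset (EuclideanSpace ℝ (Fin d) × Bool))
    (hT : IsTeachingSet (homHalfspaces d) {x | (0:ℝ) ≤ inner ℝ w x} ↑T) :
    d + 1 ≤ T.card := by
  classical
  by_contra hlt
  push_neg at hlt
  have hcard : T.card ≤ d := by omega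
  obtain ⟨hcons, huniq⟩ := hT
  have hpos : ∀ p ∈ (↑T : Set (EuclideanSpace ℝ (Fin d) × Bool)), p.2 = true → (0:ℝ) ≤ inner ℝ w p.1 :=
    fun p hp h => (hcons p hp).1 h
  have hneg : ∀ p ∈ (↑T : Set (EuclideanSpace ℝ (Fin d) × Bool)), p.2 = false → (inner ℝ w p.1 : ℝ) < 0 := by
    intro p hp h
    have := (hcons p hp).2 h
    simpa [Set.mem_setOf_eq, not_le] using this
  have hnormpos : (0:ℝ) < ‖w‖ := norm_pos_iff.mpr hw
  have hwself : (0:ℝ) < ⟪w, w⟫ := by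
    rw [real_inner_self_eq_norm_sq]
    exact pow_pos hnormpos 2
  by_cases hall : ∀ p ∈ (↑T : Set (EuclideanSpace ℝ (Fin d) × Bool)), (inner ℝ w p.1 : ℝ) = 0
  · have hL' : {x : EuclideanSpace ℝ (Fin d) | (0:ℝ) ≤ inner ℝ (-w) x} ∈ homHalfspaces d :=
      ⟨-w, neg_ne_zero.mpr hw, rfl⟩
    have hconsL' : Consistent {x : EuclideanSpace ℝ (Fin d) | (0:ℝ) ≤ inner ℝ (-w) x} ↑T := by
      intro p hp
      constructor
      · intro _
        show (0:ℝ) ≤ inner ℝ (-w) p.1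
        rw [inner_neg_left, hall p hp]
        norm_num
      · intro hf
        exact absurd (hall p hp) (ne_of_lt (hneg p hp hf))
    have heq := huniq _ hL' hconsL'
    have hwH : w ∈ {x : EuclideanSpace ℝ (Fin d) | (0:ℝ) ≤ inner ℝ w x} := le_of_lt hwself
    rw [← heq] at hwH
    have h2 : (0:ℝ) ≤ inner ℝ (-w) w := hwH
    rw [inner_neg_left] at h2
    linarith
  · push_neg at hall
    obtain ⟨p₀, hp₀T, hp₀⟩ := hall
    set Z : Finset (EuclideanSpace ℝ (Fin d)) :=
      (T.filter (fun p => (inner ℝ w p.1 : ℝ) = 0)).image Prod.fst with hZ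
    have hwZ : w ∉ Z := by
      intro hmem
      obtain ⟨p, hpf, hpw⟩ := Finset.mem_image.mp hmem
      have h3 := (Finset.mem_filter.mp hpf).2
      rw [hpw] at h3
      exact absurd h3 (ne_of_gt hwself)
    have hp₀T' : p₀ ∈ T := Finset.mem_coe.mp hp₀T
    have hZcard : Z.card + 1 ≤ d := by
      have h1 : Z.card ≤ (T.filter (fun p => (inner ℝ w p.1 : ℝ) = 0)).card :=
        Finset.card_image_le
      have h2 : (T.filter (fun p => (inner ℝ w p.1 : ℝ) = 0)).card < T.card :=
        Finset.card_lt_card (Finset.filter_ssubset.mpr ⟨p₀, hp₀T', hp₀⟩)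
      omega
    have hrank : finrank ℝ (EuclideanSpace ℝ (Fin d)) = d := finrank_euclideanSpace_fin
    obtain ⟨u, hu0, huw, huZ⟩ := exists_dual_vec (by rw [hrank]; exact hd) w Z hwZ
      (by rw [hrank]; exact hZcard)
    set T' := T.filter (fun p => (inner ℝ w p.1 : ℝ) ≠ 0) with hT'
    have hT'ne : T'.Nonempty := ⟨p₀, Finset.mem_filter.mpr ⟨hp₀T', hp₀⟩⟩
    set f : EuclideanSpace ℝ (Fin d) × Bool → ℝ :=
      fun p => |(inner ℝ w p.1 : ℝ)| / (1 + |(inner ℝ u p.1 : ℝ)|) with hf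
    set ε : ℝ := T'.inf' hT'ne f with hε
    have hεpos : 0 < ε := by
      rw [hε, Finset.lt_inf'_iff]
      intro p hp
      have h1 : (inner ℝ w p.1 : ℝ) ≠ 0 := (Finset.mem_filter.mp hp).2
      have h2 := abs_pos.mpr h1
      have h3 : (0:ℝ) < 1 + |(inner ℝ u p.1 : ℝ)| := by positivity
      exact div_pos h2 h3
    have hkey : ∀ p ∈ T', ε * |(inner ℝ u p.1 : ℝ)| < |(inner ℝ w p.1 : ℝ)| := by
      intro p hp
      have h1 : ε ≤ f p := Finset.inf'_le f hp
      have h2 : (0:ℝ) < 1 + |(inner ℝ u p.1 : ℝ)| := by positivity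
      rw [hf] at h1
      have h3 : ε * (1 + |(inner ℝ u p.1 : ℝ)|) ≤ |(inner ℝ w p.1 : ℝ)| := (le_div_iff₀ h2).mp h1
      nlinarith [abs_nonneg (inner ℝ u p.1 : ℝ)]
    set w' : EuclideanSpace ℝ (Fin d) := w + ε • u with hw'
    have hinner' : ∀ x : EuclideanSpace ℝ (Fin d),
        (inner ℝ w' x : ℝ) = inner ℝ w x + ε * inner ℝ u x := by
      intro x; rw [hw', inner_add_left, real_inner_smul_left]
    have huw' : (inner ℝ u w : ℝ) = 0 := by rw [real_inner_comm]; exact huw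
    have hw'0 : w' ≠ 0 := by
      intro h
      have h4 : (inner ℝ w' w : ℝ) = 0 := by rw [h, inner_zero_left]
      rw [hinner' w, huw'] at h4
      have := hwself
      show False
      rw [show (inner ℝ w w : ℝ) = ⟪w, w⟫ from rfl] at h4
      linarith [h4]
    have hL' : {x : EuclideanSpace ℝ (Fin d) | (0:ℝ) ≤ inner ℝ w' x} ∈ homHalfspaces d :=
      ⟨w', hw'0, rfl⟩
    have hconsL' : Consistent {x : EuclideanSpace ℝ (Fin d) | (0:ℝ) ≤ inner ℝ w' x} ↑T := by
      intro p hp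
      have hpT : p ∈ T := Finset.mem_coe.mp hp
      by_cases hz : (inner ℝ w p.1 : ℝ) = 0
      · have hmemZ : p.1 ∈ Z :=
          Finset.mem_image.mpr ⟨p, Finset.mem_filter.mpr ⟨hpT, hz⟩, rfl⟩
        constructor
        · intro _
          show (0:ℝ) ≤ inner ℝ w' p.1
          rw [hinner' p.1, hz, zero_add]
          have h5 := huZ p.1 hmemZ
          rw [real_inner_comm] at h5
          exact mul_nonneg hεpos.le h5
        · intro hf'
          exact absurd hz (ne_of_lt (hneg p hp hf'))
      · have hpT'' : p ∈ T' := Finset.mem_filter.mpr ⟨hpT, hz⟩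
        have hk := hkey p hpT''
        constructor
        · intro ht
          have h1 : (0:ℝ) ≤ inner ℝ w p.1 := hpos p hp ht
          have h2 : (0:ℝ) < inner ℝ w p.1 := lt_of_le_of_ne h1 (Ne.symm hz)
          show (0:ℝ) ≤ inner ℝ w' p.1
          rw [hinner' p.1]
          have h6 := neg_abs_le (inner ℝ u p.1 : ℝ)
          have habs : |(inner ℝ w p.1 : ℝ)| = inner ℝ w p.1 := abs_of_pos h2
          nlinarith
        · intro hf'
          have h2 : (inner ℝ w p.1 : ℝ) < 0 := hneg p hp hf'
          show p.1 ∉ {x : EuclideanSpace ℝ (Fin d) | (0:ℝ) ≤ inner ℝ w' x}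
          simp only [Set.mem_setOf_eq, not_le]
          rw [hinner' p.1]
          have h6 := le_abs_self (inner ℝ u p.1 : ℝ)
          have habs : |(inner ℝ w p.1 : ℝ)| = -(inner ℝ w p.1) := abs_of_neg h2
          nlinarith
    have heq := huniq _ hL' hconsL'
    have hmem : -u ∈ {x : EuclideanSpace ℝ (Fin d) | (0:ℝ) ≤ inner ℝ w x} := by
      show (0:ℝ) ≤ inner ℝ w (-u)
      rw [inner_neg_right, huw]
      norm_num
    rw [← heq] at hmem
    have h7 : (0:ℝ) ≤ inner ℝ w' (-u) := hmem
    rw [inner_neg_right, hinner' u] at h7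
    have huu : (0:ℝ) < inner ℝ u u := by
      rw [real_inner_self_eq_norm_sq]
      exact pow_pos (norm_pos_iff.mpr hu0) 2
    rw [huw] at h7
    nlinarith

lemma TD_eq_homHalfspaces (d : ℕ) (hd : 2 ≤ d) (w : EuclideanSpace ℝ (Fin d)) (hw : w ≠ 0) :
    TD {x | (0:ℝ) ≤ inner ℝ w x} (homHalfspaces d) = (d : ℕ∞) + 1 := by
  apply le_antisymm
  · obtain ⟨T, hTs, hTc⟩ := exists_teaching_finset d hd w hw
    apply sInf_le
    refine ⟨T, hTs, ?_⟩
    rw [hTc]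
    push_cast
    ring
  · apply le_sInf
    rintro n ⟨T, hTs, rfl⟩
    have h := teaching_card_ge d hd w hw T hTs
    exact_mod_cast h

end Aux

/-- For `d ≥ 2`: every `H ∈ 𝓗_d⁰` has `TD(H, 𝓗_d⁰) = d + 1`; consequently
`TD(𝓗_d⁰) = RTD(𝓗_d⁰) = d + 1`. -/
theorem td_rtd_homHalfspaces (d : ℕ) (hd : 2 ≤ d) :
    (∀ H ∈ homHalfspaces d, TD H (homHalfspaces d) = (d : ℕ∞) + 1) ∧
    TDclass (homHalfspaces d) = (d : ℕ∞) + 1 ∧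
    RTD (homHalfspaces d) = (d : ℕ∞) + 1 := by
  classical
  haveI : NeZero d := ⟨by omega⟩
  have h1 : ∀ H ∈ homHalfspaces d, TD H (homHalfspaces d) = (d : ℕ∞) + 1 := by
    rintro H ⟨w, hw, rfl⟩
    exact TD_eq_homHalfspaces d hd w hw
  set e : EuclideanSpace ℝ (Fin d) := EuclideanSpace.single (0 : Fin d) (1:ℝ) with he
  have he0 : e ≠ 0 := by
    intro h
    have h2 := congrArg (fun v : EuclideanSpace ℝ (Fin d) => v (0 : Fin d)) h
    rw [he] at h2
    simp [EuclideanSpace.single_apply] at h2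
  set H₀ : Set (EuclideanSpace ℝ (Fin d)) := {x | (0:ℝ) ≤ inner ℝ e x} with hH₀
  have hH₀mem : H₀ ∈ homHalfspaces d := ⟨e, he0, rfl⟩
  have hTDclass : TDclass (homHalfspaces d) = (d : ℕ∞) + 1 := by
    apply le_antisymm
    · exact iSup₂_le fun L hL => (h1 L hL).le
    · calc (d : ℕ∞) + 1 = TD H₀ (homHalfspaces d) := (h1 H₀ hH₀mem).symm
        _ ≤ ⨆ L ∈ homHalfspaces d, TD L (homHalfspaces d) :=
            le_iSup₂ (f := fun L _ => TD L (homHalfspaces d)) H₀ hH₀mem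
  refine ⟨h1, hTDclass, ?_⟩
  apply le_antisymm
  · set P : ℕ → Set (Set (EuclideanSpace ℝ (Fin d))) :=
      fun i => if i = 0 then homHalfspaces d else ∅ with hP
    have hseq : IsTeachingSeq (homHalfspaces d) P := by
      constructor
      · intro i j hij
        rcases Nat.eq_zero_or_pos j with hj | hj
        · have hi : i ≠ 0 := by omega
          simp [hP, hi]
        · have hj' : j ≠ 0 := by omega
          simp [hP, hj']
      · ext L
        simp only [Set.mem_iUnion]
        constructor
        · rintro ⟨i, hi⟩
          rw [hP] at hi
          by_cases h : i = 0
          · simpa [h] using hi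
          · simp [h] at hi
        · intro hL
          exact ⟨0, by simp [hP, hL]⟩
    apply sInf_le
    refine ⟨P, hseq, ?_⟩
    have hzero : (⋃ j, ⋃ (_ : j < 0), P j) = (∅ : Set (Set (EuclideanSpace ℝ (Fin d)))) := by
      simp
    apply le_antisymm
    · calc (d : ℕ∞) + 1
          = TD H₀ (homHalfspaces d \ ⋃ j, ⋃ (_ : j < 0), P j) := by
            rw [hzero, Set.diff_empty]; exact (h1 H₀ hH₀mem).symm
        _ ≤ ⨆ L ∈ P 0, TD L (homHalfspaces d \ ⋃ j, ⋃ (_ : j < 0), P j) :=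
            le_iSup₂ (f := fun L (_ : L ∈ P 0) =>
              TD L (homHalfspaces d \ ⋃ j, ⋃ (_ : j < 0), P j)) H₀ (by simp [hP, hH₀mem])
        _ ≤ seqOrder (homHalfspaces d) P :=
            le_iSup (fun i => ⨆ L ∈ P i, TD L (homHalfspaces d \ ⋃ j, ⋃ (_ : j < i), P j)) 0
    · apply iSup_le
      intro i
      by_cases h : i = 0
      · subst h
        apply iSup₂_le
        intro L hL
        rw [hzero, Set.diff_empty]
        exact (h1 L (by simpa [hP] using hL)).le
      · simp [hP, h]
  · apply le_sInf
    rintro v ⟨P, ⟨hdisj, hunion⟩, rfl⟩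
    have hex : ∃ i, (P i).Nonempty := by
      have hm : H₀ ∈ ⋃ i, P i := hunion ▸ hH₀mem
      obtain ⟨i, hi⟩ := Set.mem_iUnion.mp hm
      exact ⟨i, ⟨H₀, hi⟩⟩
    set i₀ := Nat.find hex with hi₀
    obtain ⟨L, hL⟩ := Nat.find_spec hex
    have hempty : (⋃ j, ⋃ (_ : j < i₀), P j) = ∅ := by
      apply Set.eq_empty_iff_forall_notMem.mpr
      intro x hx
      obtain ⟨j, hj⟩ := Set.mem_iUnion.mp hx
      obtain ⟨hji, hxj⟩ := Set.mem_iUnion.mp hj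
      exact (Nat.find_min hex hji) ⟨x, hxj⟩
    have hL𝓛 : L ∈ homHalfspaces d := by
      rw [← hunion]
      exact Set.mem_iUnion.mpr ⟨i₀, hL⟩
    calc (d : ℕ∞) + 1
        = TD L (homHalfspaces d \ ⋃ j, ⋃ (_ : j < i₀), P j) := by
          rw [hempty, Set.diff_empty]; exact (h1 L hL𝓛).symm
      _ ≤ ⨆ L' ∈ P i₀, TD L' (homHalfspaces d \ ⋃ j, ⋃ (_ : j < i₀), P j) :=
          le_iSup₂ (f := fun L' (_ : L' ∈ P i₀) =>
            TD L' (homHalfspaces d \ ⋃ j, ⋃ (_ : j < i₀), P j)) L hL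
      _ ≤ seqOrder (homHalfspaces d) P :=
          le_iSup (fun i => ⨆ L' ∈ P i, TD L' (homHalfspaces d \ ⋃ j, ⋃ (_ : j < i), P j)) i₀


end PBT
end
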